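/- arXiv:1305.6388 — 4 statements merged into one kernel-verified Lean document; each statement's English description precedes it below -/
import Mathlib

section
/- Let H be a subgroup of ℤ^k, G = ℤ^k/H, f : ℤ^k → G the quotient map, and P = f(ℕ^k). If Γ is a row-finite P-graph with no sources, then the pullback f*Γ (over the restriction of f to ℕ^k) is a row-finite k-graph with no sources. -/
/-- A `P`-graph structure on a set `V` of vertices (objects) and a set `E` of paths
(morphisms): a small category with range `r`, source `s`, identities `vert`,
a (partially meaningful) composition `comp`, together with a degree functor `d : E → P`
satisfying the unique factorisation property. -/
structure PGraphStr (P : Type) [AddCommMonoid P] (V : Type) (E : Type) where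
  r : E → V
  s : E → V
  d : E → P
  vert : V → E
  comp : E → E → E
  r_vert : ∀ v, r (vert v) = v
  s_vert : ∀ v, s (vert v) = v
  d_vert : ∀ v, d (vert v) = 0
  r_comp : ∀ μ ν, s μ = r ν → r (comp μ ν) = r μ
  s_comp : ∀ μ ν, s μ = r ν → s (comp μ ν) = s ν
  d_comp : ∀ μ ν, s μ = r ν → d (comp μ ν) = d μ + d ν
  comp_assoc : ∀ μ ν ξ, s μ = r ν → s ν = r ξ →
    comp (comp μ ν) ξ = comp μ (comp ν ξ)
  vert_comp : ∀ μ, comp (vert (r μ)) μ = μ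
  comp_vert : ∀ μ, comp μ (vert (s μ)) = μ
  factor : ∀ ξ p q, d ξ = p + q →
    ∃! ηζ : E × E, s ηζ.1 = r ηζ.2 ∧ d ηζ.1 = p ∧ d ηζ.2 = q ∧ comp ηζ.1 ηζ.2 = ξ

variable {k : ℕ} {V E : Type}

/-- A `k`-graph (an `ℕ^k`-graph) is row-finite with no sources when
`0 < |vΛ^n| < ∞` for every vertex `v` and degree `n`. -/
def RowFiniteNoSources (Λ : PGraphStr (Fin k → ℕ) V E) : Prop :=
  ∀ (v : V) (n : Fin k → ℕ),
    {e : E | Λ.r e = v ∧ Λ.d e = n}.Finite ∧ {e : E | Λ.r e = v ∧ Λ.d e = n}.Nonempty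

/-- An infinite path in a `k`-graph `Λ`: a degree-preserving functor `Ω_{ℕ^k} → Λ`,
recorded by its segments `x(m,n)` for `m ≤ n`. -/
structure InfPath (Λ : PGraphStr (Fin k → ℕ) V E) where
  seg : ∀ m n : Fin k → ℕ, m ≤ n → E
  d_seg : ∀ m n (h : m ≤ n), Λ.d (seg m n h) = n - m
  src : ∀ m n p (h₁ : m ≤ n) (h₂ : n ≤ p), Λ.s (seg m n h₁) = Λ.r (seg n p h₂)
  seg_self : ∀ m, seg m m le_rfl = Λ.vert (Λ.r (seg m m le_rfl))
  comp_seg : ∀ m n p (h₁ : m ≤ n) (h₂ : n ≤ p),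
    Λ.comp (seg m n h₁) (seg n p h₂) = seg m p (h₁.trans h₂)

/-- The range `x(0)` of an infinite path. -/
def InfPath.range {Λ : PGraphStr (Fin k → ℕ) V E} (x : InfPath Λ) : V :=
  Λ.r (x.seg 0 0 le_rfl)

/-- The shift `σ^p(x)`, with `σ^p(x)(m,n) = x(m+p,n+p)`. -/
def InfPath.shift {Λ : PGraphStr (Fin k → ℕ) V E} (p : Fin k → ℕ) (x : InfPath Λ) :
    InfPath Λ where
  seg m n h := x.seg (m + p) (n + p) (add_le_add h le_rfl)
  d_seg m n h := by
    rw [x.d_seg]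
    funext i
    simp [Nat.add_sub_add_right]
  src m n q h₁ h₂ := x.src _ _ _ _ _
  seg_self m := x.seg_self (m + p)
  comp_seg m n q h₁ h₂ := x.comp_seg _ _ _ _ _

/-- `Extends Λ y μ x` means `y = μx`: `y(0, d(μ)) = μ` and `σ^{d(μ)}(y) = x`. -/
def Extends (Λ : PGraphStr (Fin k → ℕ) V E) (y : InfPath Λ) (μ : E) (x : InfPath Λ) :
    Prop :=
  y.seg 0 (Λ.d μ) zero_le = μ ∧ y.shift (Λ.d μ) = x

/-- The relation `μ ∼ ν`: `s(μ) = s(ν)` and `μx = νx` for every infinite path `x`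
with range `s(μ)`. -/
def CKeq (Λ : PGraphStr (Fin k → ℕ) V E) (μ ν : E) : Prop :=
  Λ.s μ = Λ.s ν ∧ ∀ x y z : InfPath Λ, x.range = Λ.s μ →
    Extends Λ y μ x → Extends Λ z ν x → y = z

/-- The periodicity set `Per(Λ) = {d(μ) - d(ν) : μ ∼ ν} ⊆ ℤ^k`. -/
def PerSet (Λ : PGraphStr (Fin k → ℕ) V E) : Set (Fin k → ℤ) :=
  {g | ∃ μ ν : E, CKeq Λ μ ν ∧ g = fun i => (Λ.d μ i : ℤ) - (Λ.d ν i : ℤ)}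

/-- A maximal tail in a `k`-graph. -/
def IsMaximalTail (Λ : PGraphStr (Fin k → ℕ) V E) (T : Set V) : Prop :=
  T.Nonempty ∧
  (∀ v₁ ∈ T, ∀ v₂ ∈ T, ∃ w ∈ T,
    (∃ e : E, Λ.r e = v₁ ∧ Λ.s e = w) ∧ ∃ e : E, Λ.r e = v₂ ∧ Λ.s e = w) ∧
  (∀ v ∈ T, ∀ i : Fin k,
    ∃ e : E, Λ.r e = v ∧ Λ.d e = Pi.single i 1 ∧ Λ.s e ∈ T) ∧
  (∀ w ∈ T, ∀ (v : V) (e : E), Λ.r e = v → Λ.s e = w → v ∈ T)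

/-- `Σ_v = {(p,q) : σ^p(x) = σ^q(x) for all x ∈ vΛ^∞}`. -/
def SigmaV (Λ : PGraphStr (Fin k → ℕ) V E) (v : V) :
    Set ((Fin k → ℕ) × (Fin k → ℕ)) :=
  {pq | ∀ x : InfPath Λ, x.range = v → x.shift pq.1 = x.shift pq.2}

/-- `Σ_Λ = ⋃_v Σ_v`. -/
def SigmaL (Λ : PGraphStr (Fin k → ℕ) V E) : Set ((Fin k → ℕ) × (Fin k → ℕ)) :=
  ⋃ v : V, SigmaV Λ v

/-- The hereditary set `H_Per`. -/
def HPer (Λ : PGraphStr (Fin k → ℕ) V E) : Set V :=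
  {v | ∀ lam : E, Λ.r lam = v → ∀ m : Fin k → ℕ,
    (fun i => (Λ.d lam i : ℤ) - (m i : ℤ)) ∈ PerSet Λ →
    ∃ μ : E, Λ.r μ = v ∧ Λ.d μ = m ∧ CKeq Λ lam μ}

/-- The coordinatewise inclusion `ℕ^k →+ ℤ^k`. -/
def intCast (k : ℕ) : (Fin k → ℕ) →+ (Fin k → ℤ) where
  toFun n := fun i => (n i : ℤ)
  map_zero' := by funext i; simp
  map_add' a b := by funext i; simp

/-- The composite `ℕ^k → ℤ^k → ℤ^k/H`. -/
def quotHom (k : ℕ) (H : AddSubgroup (Fin k → ℤ)) :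
    (Fin k → ℕ) →+ (Fin k → ℤ) ⧸ H :=
  (QuotientAddGroup.mk' H).comp (intCast k)

/-- The submonoid `P = f(ℕ^k)` of `ℤ^k/H`. -/
def PMon (k : ℕ) (H : AddSubgroup (Fin k → ℤ)) : AddSubmonoid ((Fin k → ℤ) ⧸ H) :=
  AddMonoidHom.mrange (quotHom k H)

theorem mem_PMon (k : ℕ) (H : AddSubgroup (Fin k → ℤ)) (n : Fin k → ℕ) :
    quotHom k H n ∈ PMon k H :=
  ⟨n, rfl⟩

/-- Let `H ≤ ℤ^k`, `G = ℤ^k/H`, `f : ℤ^k → G` the quotient map and `P = f(ℕ^k)`.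
If `Γ` is a row-finite `P`-graph with no sources, then the pullback `f*Γ` (over the
restriction of `f` to `ℕ^k`) is a row-finite `k`-graph with no sources. -/
theorem stmt6 (k : ℕ) (V E : Type) [Countable E] (H : AddSubgroup (Fin k → ℤ))
    (Γ : PGraphStr ↥(PMon k H) V E)
    (hΓ : ∀ (v : V) (p : ↥(PMon k H)),
      {e : E | Γ.r e = v ∧ Γ.d e = p}.Finite ∧
      {e : E | Γ.r e = v ∧ Γ.d e = p}.Nonempty) :
    ∃ str : PGraphStr (Fin k → ℕ) V
        {x : E × (Fin k → ℕ) // Γ.d x.1 = ⟨quotHom k H x.2, mem_PMon k H x.2⟩},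
      (∀ x, str.r x = Γ.r x.1.1) ∧
      (∀ x, str.s x = Γ.s x.1.1) ∧
      (∀ x, str.d x = x.1.2) ∧
      (∀ v, (str.vert v).1 = (Γ.vert v, 0)) ∧
      (∀ x y : {x : E × (Fin k → ℕ) // Γ.d x.1 = ⟨quotHom k H x.2, mem_PMon k H x.2⟩},
        Γ.s x.1.1 = Γ.r y.1.1 →
        (str.comp x y).1 = (Γ.comp x.1.1 y.1.1, x.1.2 + y.1.2)) ∧
      RowFiniteNoSources str := by
  classical
  have hadd : ∀ m n : Fin k → ℕ,
      (⟨quotHom k H m, mem_PMon k H m⟩ : ↥(PMon k H)) + ⟨quotHom k H n, mem_PMon k H n⟩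
        = ⟨quotHom k H (m + n), mem_PMon k H (m + n)⟩ := by
    intro m n; apply Subtype.ext; exact (map_add (quotHom k H) m n).symm
  have hzero : (0 : ↥(PMon k H)) = ⟨quotHom k H 0, mem_PMon k H 0⟩ := by
    apply Subtype.ext; exact (map_zero (quotHom k H)).symm
  have hcongr : ∀ {m n : Fin k → ℕ}, m = n →
      (⟨quotHom k H m, mem_PMon k H m⟩ : ↥(PMon k H)) = ⟨quotHom k H n, mem_PMon k H n⟩ := by
    rintro m n rfl; rfl
  set T := {x : E × (Fin k → ℕ) // Γ.d x.1 = ⟨quotHom k H x.2, mem_PMon k H x.2⟩} with hT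
  let cmp : T → T → T := fun x y =>
    if h : Γ.s x.1.1 = Γ.r y.1.1 then
      ⟨(Γ.comp x.1.1 y.1.1, x.1.2 + y.1.2), by
        rw [Γ.d_comp _ _ h, x.2, y.2, hadd]⟩
    else x
  have cmp_def : ∀ x y : T, Γ.s x.1.1 = Γ.r y.1.1 →
      (cmp x y).1 = (Γ.comp x.1.1 y.1.1, x.1.2 + y.1.2) := by
    intro x y h; simp only [cmp, dif_pos h]
  let str : PGraphStr (Fin k → ℕ) V T :=
    { r := fun x => Γ.r x.1.1
      s := fun x => Γ.s x.1.1
      d := fun x => x.1.2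
      vert := fun v => ⟨(Γ.vert v, 0), by rw [Γ.d_vert, hzero]⟩
      comp := cmp
      r_vert := fun v => Γ.r_vert v
      s_vert := fun v => Γ.s_vert v
      d_vert := fun v => rfl
      r_comp := by
        intro μ ν h
        show Γ.r (cmp μ ν).1.1 = Γ.r μ.1.1
        rw [cmp_def μ ν h]; exact Γ.r_comp _ _ h
      s_comp := by
        intro μ ν h
        show Γ.s (cmp μ ν).1.1 = Γ.s ν.1.1
        rw [cmp_def μ ν h]; exact Γ.s_comp _ _ h
      d_comp := by
        intro μ ν h
        show (cmp μ ν).1.2 = μ.1.2 + ν.1.2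
        rw [cmp_def μ ν h]
      comp_assoc := by
        intro μ ν ξ h₁ h₂
        have h₃ : Γ.s (Γ.comp μ.1.1 ν.1.1) = Γ.r ξ.1.1 := by
          rw [Γ.s_comp _ _ h₁]; exact h₂
        have h₄ : Γ.s μ.1.1 = Γ.r (Γ.comp ν.1.1 ξ.1.1) := by
          rw [Γ.r_comp _ _ h₂]; exact h₁
        apply Subtype.ext
        show (cmp (cmp μ ν) ξ).1 = (cmp μ (cmp ν ξ)).1
        have e1 := cmp_def μ ν h₁
        have e2 := cmp_def ν ξ h₂
        have e3 : Γ.s (cmp μ ν).1.1 = Γ.r ξ.1.1 := by rw [e1]; exact h₃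
        have e4 : Γ.s μ.1.1 = Γ.r (cmp ν ξ).1.1 := by rw [e2]; exact h₄
        rw [cmp_def _ _ e3, cmp_def _ _ e4, e1, e2]
        simp only [Prod.mk.injEq]
        exact ⟨Γ.comp_assoc _ _ _ h₁ h₂, add_assoc _ _ _⟩
      vert_comp := by
        intro μ
        have h : Γ.s (Γ.vert (Γ.r μ.1.1)) = Γ.r μ.1.1 := Γ.s_vert _
        apply Subtype.ext
        rw [cmp_def _ _ h]
        exact Prod.ext (Γ.vert_comp _) (by simp)
      comp_vert := by
        intro μ
        have h : Γ.s μ.1.1 = Γ.r (Γ.vert (Γ.s μ.1.1)) := (Γ.r_vert _).symm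
        apply Subtype.ext
        rw [cmp_def _ _ h]
        exact Prod.ext (Γ.comp_vert _) (by simp)
      factor := by
        intro ξ p q hpq
        have hpq' : ξ.1.2 = p + q := hpq
        have hd : Γ.d ξ.1.1 = (⟨quotHom k H p, mem_PMon k H p⟩ : ↥(PMon k H))
            + ⟨quotHom k H q, mem_PMon k H q⟩ := by
          rw [ξ.2, hadd]
          exact hcongr hpq'
        obtain ⟨⟨η, ζ⟩, ⟨hs, hdη, hdζ, hc⟩, huniq⟩ := Γ.factor ξ.1.1 _ _ hd
        refine ⟨(⟨(η, p), hdη⟩, ⟨(ζ, q), hdζ⟩), ⟨hs, rfl, rfl, ?_⟩, ?_⟩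
        · apply Subtype.ext
          show (cmp _ _).1 = ξ.1
          rw [cmp_def _ _ hs]
          rw [show ((⟨(η, p), hdη⟩ : T)).1.1 = η from rfl]
          rw [hc]
          exact Prod.ext rfl hpq'.symm
        · rintro ⟨a, b⟩ ⟨hs', hda, hdb, hc'⟩
          have hda' : a.1.2 = p := hda
          have hdb' : b.1.2 = q := hdb
          have hcv : ((Γ.comp a.1.1 b.1.1, a.1.2 + b.1.2) : E × (Fin k → ℕ)) = ξ.1 := by
            rw [← cmp_def a b hs']; exact congrArg Subtype.val hc'
          have h1 : Γ.comp a.1.1 b.1.1 = ξ.1.1 := congrArg Prod.fst hcv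
          have hab : (a.1.1, b.1.1) = (η, ζ) := by
            apply huniq
            refine ⟨hs', ?_, ?_, h1⟩
            · rw [a.2]; exact hcongr hda'
            · rw [b.2]; exact hcongr hdb'
          have ha1 : a.1.1 = η := congrArg Prod.fst hab
          have hb1 : b.1.1 = ζ := congrArg Prod.snd hab
          simp only [Prod.mk.injEq]
          constructor
          · apply Subtype.ext; exact Prod.ext ha1 hda'
          · apply Subtype.ext; exact Prod.ext hb1 hdb' }
  refine ⟨str, fun x => rfl, fun x => rfl, fun x => rfl, fun v => rfl, cmp_def, ?_⟩
  intro v n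
  have key : {e : T | str.r e = v ∧ str.d e = n}
      = (fun e : {e : E // Γ.r e = v ∧ Γ.d e = ⟨quotHom k H n, mem_PMon k H n⟩} =>
          (⟨(e.1, n), e.2.2⟩ : T)) '' Set.univ := by
    ext x
    simp only [Set.image_univ, Set.mem_range, Set.mem_setOf_eq]
    constructor
    · rintro ⟨hr, hd⟩
      have hd' : x.1.2 = n := hd
      refine ⟨⟨x.1.1, hr, ?_⟩, ?_⟩
      · rw [x.2]; exact hcongr hd'
      · apply Subtype.ext; exact Prod.ext rfl hd'.symm
    · rintro ⟨e, rfl⟩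
      exact ⟨e.2.1, rfl⟩
  obtain ⟨hfin, hne⟩ := hΓ v ⟨quotHom k H n, mem_PMon k H n⟩
  constructor
  · rw [key]
    apply Set.Finite.image
    have : Finite {e : E // Γ.r e = v ∧ Γ.d e = ⟨quotHom k H n, mem_PMon k H n⟩} :=
      hfin.to_subtype
    exact Set.finite_univ
  · obtain ⟨e, he⟩ := hne
    rw [key]
    exact ⟨_, Set.mem_image_of_mem _ (Set.mem_univ ⟨e, he⟩)⟩
end

section
/- Let Λ be a row-finite k-graph with no sources such that Λ⁰ is a maximal tail. Then Per(Λ) := {d(μ) - d(ν) : μ, ν ∈ Λ, μ ∼ ν} is a subgroup of ℤ^k. -/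
variable {k : ℕ} {V E : Type}

/-! ### Auxiliary development -/

section Aux

variable (Λ : PGraphStr (Fin k → ℕ) V E)

private lemma pi_sub_eq {a b c : Fin k → ℕ} (hab : a ≤ b) (hbc : b ≤ c) :
    (c - a : Fin k → ℕ) = (b - a) + (c - b) := by
  funext i
  have h1 : a i ≤ b i := hab i
  have h2 : b i ≤ c i := hbc i
  simp only [Pi.sub_apply, Pi.add_apply]
  omega

/-- Unique "three-part" factorisation: the middle segment of `ξ` between `a` and `b`. -/
lemma PGraphStr.triFactor (ξ : E) (a b : Fin k → ℕ) (hab : a ≤ b) (hb : b ≤ Λ.d ξ) :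
    ∃! θ : E, ∃ η ζ, Λ.s η = Λ.r θ ∧ Λ.s θ = Λ.r ζ ∧ Λ.d η = a ∧ Λ.d θ = b - a ∧
      Λ.comp η (Λ.comp θ ζ) = ξ := by
  have hax : a ≤ Λ.d ξ := hab.trans hb
  have h1 : Λ.d ξ = a + (Λ.d ξ - a) := by
    funext i; have hh : a i ≤ Λ.d ξ i := hax i
    simp only [Pi.add_apply, Pi.sub_apply]; omega
  obtain ⟨⟨η, ρ⟩, ⟨hsr1, hd1, hd2, hc1⟩, hu1⟩ := Λ.factor ξ a (Λ.d ξ - a) h1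
  have h2 : Λ.d ρ = (b - a) + (Λ.d ξ - b) := by
    rw [hd2]
    funext i; have h1 : a i ≤ b i := hab i; have h2 : b i ≤ Λ.d ξ i := hb i
    simp only [Pi.add_apply, Pi.sub_apply]; omega
  obtain ⟨⟨θ, ζ⟩, ⟨hsr2, hd3, hd4, hc2⟩, hu2⟩ := Λ.factor ρ (b - a) (Λ.d ξ - b) h2
  refine ⟨θ, ⟨η, ζ, ?_, hsr2, hd1, hd3, ?_⟩, ?_⟩
  · rw [hsr1, ← hc2, Λ.r_comp _ _ hsr2]
  · rw [hc2, hc1]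
  · rintro θ' ⟨η', ζ', hsr1', hsr2', hd1', hd3', hc'⟩
    have hsc : Λ.s η' = Λ.r (Λ.comp θ' ζ') := by rw [Λ.r_comp _ _ hsr2', hsr1']
    have hdζ' : Λ.d ζ' = Λ.d ξ - b := by
      have hdx : Λ.d ξ = Λ.d η' + (Λ.d θ' + Λ.d ζ') := by
        rw [← hc', Λ.d_comp _ _ hsc, Λ.d_comp _ _ hsr2']
      funext i
      have := congrFun hdx i
      have h1' := congrFun hd1' i
      have h3' := congrFun hd3' i
      have h1'' : a i ≤ b i := hab i; have h2'' : b i ≤ Λ.d ξ i := hb i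
      simp only [Pi.add_apply, Pi.sub_apply] at *
      omega
    have hdc : Λ.d (Λ.comp θ' ζ') = Λ.d ξ - a := by
      rw [Λ.d_comp _ _ hsr2', hd3', hdζ', ← pi_sub_eq hab hb]
    have e1 : (η', Λ.comp θ' ζ') = (η, ρ) := hu1 _ ⟨hsc, hd1', hdc, by
      rw [← Λ.comp_assoc _ _ _ hsr1' hsr2'] at hc'
      rw [← hc', Λ.comp_assoc _ _ _ hsr1' hsr2']⟩
    have e2 : (θ', ζ') = (θ, ζ) := hu2 _ ⟨hsr2', hd3', hdζ', by
      have := congrArg Prod.snd e1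
      simpa using this⟩
    exact congrArg Prod.fst e2

/-- The middle segment `ξ(a,b)` of `ξ`. -/
noncomputable def PGraphStr.mid (ξ : E) (a b : Fin k → ℕ) (hab : a ≤ b) (hb : b ≤ Λ.d ξ) : E :=
  (Λ.triFactor ξ a b hab hb).choose

lemma PGraphStr.mid_spec (ξ : E) (a b : Fin k → ℕ) (hab : a ≤ b) (hb : b ≤ Λ.d ξ) :
    ∃ η ζ, Λ.s η = Λ.r (Λ.mid ξ a b hab hb) ∧ Λ.s (Λ.mid ξ a b hab hb) = Λ.r ζ ∧
      Λ.d η = a ∧ Λ.d (Λ.mid ξ a b hab hb) = b - a ∧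
      Λ.comp η (Λ.comp (Λ.mid ξ a b hab hb) ζ) = ξ :=
  (Λ.triFactor ξ a b hab hb).choose_spec.1

lemma PGraphStr.mid_unique {ξ : E} {a b : Fin k → ℕ} (hab : a ≤ b) (hb : b ≤ Λ.d ξ)
    {η θ ζ : E} (h1 : Λ.s η = Λ.r θ) (h2 : Λ.s θ = Λ.r ζ) (h3 : Λ.d η = a)
    (h4 : Λ.d θ = b - a) (h5 : Λ.comp η (Λ.comp θ ζ) = ξ) :
    θ = Λ.mid ξ a b hab hb :=
  (Λ.triFactor ξ a b hab hb).choose_spec.2 θ ⟨η, ζ, h1, h2, h3, h4, h5⟩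

lemma PGraphStr.mid_d (ξ : E) (a b : Fin k → ℕ) (hab : a ≤ b) (hb : b ≤ Λ.d ξ) :
    Λ.d (Λ.mid ξ a b hab hb) = b - a := by
  obtain ⟨η, ζ, _, _, _, h, _⟩ := Λ.mid_spec ξ a b hab hb
  exact h

lemma PGraphStr.mid_congr {ξ ξ' : E} (hξ : ξ = ξ') {a b : Fin k → ℕ} (hab : a ≤ b)
    (hb : b ≤ Λ.d ξ) (hb' : b ≤ Λ.d ξ') :
    Λ.mid ξ a b hab hb = Λ.mid ξ' a b hab hb' := by subst hξ; rfl

/-- Every degree-zero path is a vertex. -/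
lemma PGraphStr.deg_zero {ξ : E} (h : Λ.d ξ = 0) : ξ = Λ.vert (Λ.r ξ) := by
  have h00 : Λ.d ξ = 0 + 0 := by rw [h, add_zero]
  obtain ⟨c, _, hu⟩ := Λ.factor ξ 0 0 h00
  have e1 : (Λ.vert (Λ.r ξ), ξ) = c := hu _ ⟨by rw [Λ.s_vert], Λ.d_vert _, h, Λ.vert_comp ξ⟩
  have e2 : (ξ, Λ.vert (Λ.s ξ)) = c := hu _ ⟨(Λ.r_vert _).symm, h, Λ.d_vert _, Λ.comp_vert ξ⟩
  have := (congrArg Prod.fst e1).trans (congrArg Prod.fst e2).symm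
  exact this.symm

lemma PGraphStr.mid_prefix {ξ ζp ρ : E} (hsr : Λ.s ζp = Λ.r ρ) (hξ : ξ = Λ.comp ζp ρ)
    {a b : Fin k → ℕ} (hab : a ≤ b) (hbζ : b ≤ Λ.d ζp) (hbξ : b ≤ Λ.d ξ) :
    Λ.mid ξ a b hab hbξ = Λ.mid ζp a b hab hbζ := by
  obtain ⟨η, ζ₂, hs1, hs2, hd1, hd2, hc⟩ := Λ.mid_spec ζp a b hab hbζ
  set M := Λ.mid ζp a b hab hbζ with hM
  have hsζ₂ : Λ.s ζ₂ = Λ.r ρ := by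
    rw [← hsr, ← hc, Λ.s_comp _ _ (by rw [hs1, Λ.r_comp _ _ hs2]),
      Λ.s_comp _ _ hs2]
  have hsM : Λ.s (Λ.comp M ζ₂) = Λ.r ρ := by rw [Λ.s_comp _ _ hs2, hsζ₂]
  have hξ' : ξ = Λ.comp η (Λ.comp M (Λ.comp ζ₂ ρ)) := by
    rw [hξ, ← hc, Λ.comp_assoc _ _ _ (by rw [hs1, Λ.r_comp _ _ hs2]) hsM,
      Λ.comp_assoc _ _ _ hs2 hsζ₂]
  exact (Λ.mid_unique hab hbξ hs1 (by rw [Λ.r_comp _ _ hsζ₂, ← hs2]) hd1 hd2 hξ'.symm).symm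

lemma PGraphStr.mid_trisect (ξ : E) (a b c : Fin k → ℕ) (hab : a ≤ b) (hbc : b ≤ c)
    (hc : c ≤ Λ.d ξ) :
    Λ.s (Λ.mid ξ a b hab (hbc.trans hc)) = Λ.r (Λ.mid ξ b c hbc hc) ∧
    Λ.comp (Λ.mid ξ a b hab (hbc.trans hc)) (Λ.mid ξ b c hbc hc) =
      Λ.mid ξ a c (hab.trans hbc) hc := by
  obtain ⟨η, ζ, hs1, hs2, hd1, hd2, hcomp⟩ := Λ.mid_spec ξ a c (hab.trans hbc) hc
  set M := Λ.mid ξ a c (hab.trans hbc) hc with hM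
  have h2 : Λ.d M = (b - a) + (c - b) := by rw [hd2]; exact pi_sub_eq hab hbc
  obtain ⟨⟨θ₁, θ₂⟩, ⟨hsr, hdθ1, hdθ2, hcM⟩, _⟩ := Λ.factor M (b - a) (c - b) h2
  dsimp only at hsr hdθ1 hdθ2 hcM
  have hsθ₂ : Λ.s θ₂ = Λ.r ζ := by
    rw [← hs2, ← hcM, Λ.s_comp _ _ hsr]
  have hrθ₁ : Λ.s η = Λ.r θ₁ := by
    rw [hs1, ← hcM, Λ.r_comp _ _ hsr]
  have hasc : M = Λ.comp θ₁ θ₂ := hcM.symm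
  have e1 : θ₁ = Λ.mid ξ a b hab (hbc.trans hc) := by
    refine Λ.mid_unique hab (hbc.trans hc) (η := η) (ζ := Λ.comp θ₂ ζ) hrθ₁
      (by rw [Λ.r_comp _ _ hsθ₂]; exact hsr) hd1 hdθ1 ?_
    rw [← Λ.comp_assoc θ₁ θ₂ ζ hsr hsθ₂, hcM, hcomp]
  have e2 : θ₂ = Λ.mid ξ b c hbc hc := by
    refine Λ.mid_unique hbc hc (η := Λ.comp η θ₁) (ζ := ζ)
      (by rw [Λ.s_comp _ _ hrθ₁, hsr]) hsθ₂
      (by rw [Λ.d_comp _ _ hrθ₁, hd1, hdθ1]; funext i; have h1 : a i ≤ b i := hab i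
          simp only [Pi.add_apply, Pi.sub_apply]; omega) hdθ2 ?_
    rw [Λ.comp_assoc η θ₁ (Λ.comp θ₂ ζ) hrθ₁
        (by rw [Λ.r_comp _ _ hsθ₂]; exact hsr), ← Λ.comp_assoc θ₁ θ₂ ζ hsr hsθ₂, hcM, hcomp]
  constructor
  · rw [← e1, ← e2, hsr]
  · rw [← e1, ← e2, hcM]

lemma PGraphStr.mid_r (ξ : E) (b : Fin k → ℕ) (hb : b ≤ Λ.d ξ) :
    Λ.r (Λ.mid ξ 0 b zero_le hb) = Λ.r ξ := by
  obtain ⟨η, ζ, hs1, hs2, hd1, _, hcomp⟩ := Λ.mid_spec ξ 0 b zero_le hb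
  have hv : η = Λ.vert (Λ.r η) := Λ.deg_zero hd1
  have hsη : Λ.s η = Λ.r η := by rw [hv, Λ.s_vert, Λ.r_vert]
  have hrr : Λ.r ξ = Λ.r η := by
    rw [← hcomp, Λ.r_comp _ _ (by rw [Λ.r_comp _ _ hs2, ← hs1])]
  rw [hrr, ← hsη, hs1]

end Aux


section Aux2

variable {Λ : PGraphStr (Fin k → ℕ) V E}

lemma InfPath.ext' {x y : InfPath Λ}
    (h : ∀ m n (hmn : m ≤ n), x.seg m n hmn = y.seg m n hmn) : x = y := by
  obtain ⟨sx, _, _, _, _⟩ := x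
  obtain ⟨sy, _, _, _, _⟩ := y
  have hs : sx = sy := by funext m n hmn; exact h m n hmn
  subst hs
  rfl

lemma InfPath.seg_congr (x : InfPath Λ) {m n m' n' : Fin k → ℕ}
    (h : m ≤ n) (h' : m' ≤ n') (hm : m = m') (hn : n = n') :
    x.seg m n h = x.seg m' n' h' := by subst hm; subst hn; rfl

lemma InfPath.range_r (x : InfPath Λ) (n : Fin k → ℕ) :
    Λ.r (x.seg 0 n zero_le) = x.range := by
  have hc := x.comp_seg 0 0 n le_rfl zero_le
  have hsr := x.src 0 0 n le_rfl zero_le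
  have : Λ.r (Λ.comp (x.seg 0 0 le_rfl) (x.seg 0 n zero_le)) = x.range :=
    Λ.r_comp _ _ hsr
  rw [hc] at this
  exact this

lemma InfPath.s_seg (x : InfPath Λ) (m n : Fin k → ℕ) (h : m ≤ n) :
    Λ.s (x.seg m n h) = Λ.s (x.seg 0 n zero_le) := by
  have hc := x.comp_seg 0 m n zero_le h
  have hsr := x.src 0 m n zero_le h
  have : Λ.s (Λ.comp (x.seg 0 m zero_le) (x.seg m n h)) = Λ.s (x.seg m n h) :=
    Λ.s_comp _ _ hsr
  rw [hc] at this
  exact this.symm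

lemma InfPath.shift_seg (x : InfPath Λ) (p m n : Fin k → ℕ) (h : m ≤ n) :
    (x.shift p).seg m n h = x.seg (m + p) (n + p) (add_le_add h le_rfl) := rfl

lemma InfPath.shift_shift (x : InfPath Λ) (p q : Fin k → ℕ) :
    (x.shift p).shift q = x.shift (q + p) :=
  InfPath.ext' fun m n h =>
    x.seg_congr _ _ (add_assoc m q p) (add_assoc n q p)

lemma InfPath.shift_zero (x : InfPath Λ) : x.shift 0 = x :=
  InfPath.ext' fun m n h => x.seg_congr _ _ (add_zero m) (add_zero n)

lemma InfPath.shift_range (x : InfPath Λ) (p : Fin k → ℕ) :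
    (x.shift p).range = Λ.s (x.seg 0 p zero_le) := by
  have h1 : (x.shift p).range = Λ.r (x.seg (0 + p) (0 + p) le_rfl) := rfl
  rw [h1, x.seg_congr (m' := p) (n' := p) _ le_rfl (zero_add p) (zero_add p)]
  exact (x.src 0 p p zero_le le_rfl).symm

lemma InfPath.seg_eq_mid (x : InfPath Λ) (m n N : Fin k → ℕ) (h : m ≤ n) (hN : n ≤ N) :
    x.seg m n h = Λ.mid (x.seg 0 N zero_le) m n h
      (by rw [x.d_seg]; intro i; simpa using hN i) := by
  refine Λ.mid_unique h _ (η := x.seg 0 m zero_le) (ζ := x.seg n N hN)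
    (x.src 0 m n zero_le h) (x.src m n N h hN)
    (by rw [x.d_seg]; funext i; simp) (x.d_seg m n h) ?_
  rw [x.comp_seg m n N h hN, x.comp_seg 0 m N zero_le (h.trans hN)]

lemma InfPath.seg_determines {x y : InfPath Λ} (m n N : Fin k → ℕ) (h : m ≤ n) (hN : n ≤ N)
    (hpre : x.seg 0 N zero_le = y.seg 0 N zero_le) :
    x.seg m n h = y.seg m n h := by
  rw [x.seg_eq_mid m n N h hN, y.seg_eq_mid m n N h hN]
  exact Λ.mid_congr hpre _ _ _

lemma extends_seg {y x : InfPath Λ} {lam : E} (hy : Extends Λ y lam x) (n : Fin k → ℕ) :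
    y.seg 0 (n + Λ.d lam) zero_le = Λ.comp lam (x.seg 0 n zero_le) := by
  obtain ⟨h1, h2⟩ := hy
  have hc := y.comp_seg 0 (Λ.d lam) (n + Λ.d lam) zero_le le_add_self
  have hmid : y.seg (Λ.d lam) (n + Λ.d lam) le_add_self = x.seg 0 n zero_le := by
    rw [← h2]
    exact y.seg_congr _ _ (zero_add _).symm rfl
  rw [← hc, h1, hmid]

lemma extends_unique {y z x : InfPath Λ} {lam : E} (hy : Extends Λ y lam x)
    (hz : Extends Λ z lam x) : y = z := by
  refine InfPath.ext' fun m n h => ?_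
  exact InfPath.seg_determines m n (n + Λ.d lam) h le_self_add
    ((extends_seg hy n).trans (extends_seg hz n).symm)

/-- Build an infinite path from a monotone compatible system of approximations. -/
noncomputable def PGraphStr.ofApprox (Λ : PGraphStr (Fin k → ℕ) V E) (A : (Fin k → ℕ) → E)
    (hle : ∀ n, n ≤ Λ.d (A n))
    (hcompat : ∀ m n, m ≤ n → ∃ ρ, Λ.s (A m) = Λ.r ρ ∧ A n = Λ.comp (A m) ρ) :
    InfPath Λ where
  seg m n h := Λ.mid (A n) m n h (hle n)
  d_seg m n h := Λ.mid_d (A n) m n h (hle n)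
  src m n p h₁ h₂ := by
    obtain ⟨ρ, h3, h4⟩ := hcompat n p h₂
    have hnp : (n : Fin k → ℕ) ≤ Λ.d (A p) := by
      refine le_trans (hle n) ?_
      rw [h4, Λ.d_comp _ _ h3]
      exact le_self_add
    show Λ.s (Λ.mid (A n) m n h₁ (hle n)) = Λ.r (Λ.mid (A p) n p h₂ (hle p))
    rw [← Λ.mid_prefix h3 h4 h₁ (hle n) hnp]
    exact (Λ.mid_trisect (A p) m n p h₁ h₂ (hle p)).1
  seg_self m := Λ.deg_zero (by rw [Λ.mid_d]; funext i; simp)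
  comp_seg m n p h₁ h₂ := by
    obtain ⟨ρ, h3, h4⟩ := hcompat n p h₂
    have hnp : (n : Fin k → ℕ) ≤ Λ.d (A p) := by
      refine le_trans (hle n) ?_
      rw [h4, Λ.d_comp _ _ h3]
      exact le_self_add
    show Λ.comp (Λ.mid (A n) m n h₁ (hle n)) (Λ.mid (A p) n p h₂ (hle p)) =
      Λ.mid (A p) m p (h₁.trans h₂) (hle p)
    rw [← Λ.mid_prefix h3 h4 h₁ (hle n) hnp]
    exact (Λ.mid_trisect (A p) m n p h₁ h₂ (hle p)).2

lemma PGraphStr.ofApprox_range (Λ : PGraphStr (Fin k → ℕ) V E) (A : (Fin k → ℕ) → E)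
    (hle : ∀ n, n ≤ Λ.d (A n))
    (hcompat : ∀ m n, m ≤ n → ∃ ρ, Λ.s (A m) = Λ.r ρ ∧ A n = Λ.comp (A m) ρ) :
    (Λ.ofApprox A hle hcompat).range = Λ.r (A 0) := by
  have : (Λ.ofApprox A hle hcompat).range = Λ.r (Λ.mid (A 0) 0 0 le_rfl (hle 0)) := rfl
  rw [this, Λ.mid_r (A 0) 0 (hle 0)]

end Aux2


section Aux3

variable {Λ : PGraphStr (Fin k → ℕ) V E}

private lemma concat_hsr {lam : E} {x : InfPath Λ} (h : Λ.s lam = x.range)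
    (n : Fin k → ℕ) : Λ.s lam = Λ.r (x.seg 0 n zero_le) :=
  h.trans (x.range_r n).symm

/-- The infinite path `lam · x`. -/
noncomputable def PGraphStr.concat (Λ : PGraphStr (Fin k → ℕ) V E) (lam : E)
    (x : InfPath Λ) (h : Λ.s lam = x.range) : InfPath Λ :=
  Λ.ofApprox (fun n => Λ.comp lam (x.seg 0 n zero_le))
    (fun n => by
      rw [Λ.d_comp _ _ (concat_hsr h n), x.d_seg]
      intro i
      simp only [Pi.add_apply, Pi.sub_apply, Pi.zero_apply]
      omega)
    (fun m n hmn => by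
      refine ⟨x.seg m n hmn, ?_, ?_⟩
      · rw [Λ.s_comp _ _ (concat_hsr h m)]
        exact x.src 0 m n zero_le hmn
      · show Λ.comp lam (x.seg 0 n zero_le) =
          Λ.comp (Λ.comp lam (x.seg 0 m zero_le)) (x.seg m n hmn)
        rw [← x.comp_seg 0 m n zero_le hmn,
          ← Λ.comp_assoc lam (x.seg 0 m zero_le) (x.seg m n hmn) (concat_hsr h m)
            (x.src 0 m n zero_le hmn)])

lemma PGraphStr.concat_range (Λ : PGraphStr (Fin k → ℕ) V E) (lam : E)
    (x : InfPath Λ) (h : Λ.s lam = x.range) : (Λ.concat lam x h).range = Λ.r lam := by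
  rw [PGraphStr.concat, Λ.ofApprox_range]
  exact Λ.r_comp _ _ (concat_hsr h 0)

lemma PGraphStr.concat_extends (Λ : PGraphStr (Fin k → ℕ) V E) (lam : E)
    (x : InfPath Λ) (h : Λ.s lam = x.range) : Extends Λ (Λ.concat lam x h) lam x := by
  constructor
  · have hble : Λ.d lam ≤ Λ.d (Λ.comp lam (x.seg 0 (Λ.d lam) zero_le)) := by
      rw [Λ.d_comp _ _ (concat_hsr h _)]
      exact le_self_add
    show Λ.mid (Λ.comp lam (x.seg 0 (Λ.d lam) zero_le)) 0 (Λ.d lam) zero_le hble = lam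
    refine (Λ.mid_unique zero_le hble (η := Λ.vert (Λ.r lam))
      (ζ := x.seg 0 (Λ.d lam) zero_le) (by rw [Λ.s_vert]) (concat_hsr h _)
      (Λ.d_vert _) (by funext i; simp) ?_).symm
    have hr2 : Λ.r (Λ.comp lam (x.seg 0 (Λ.d lam) zero_le)) = Λ.r lam :=
      Λ.r_comp _ _ (concat_hsr h _)
    rw [← hr2]
    exact Λ.vert_comp _
  · refine InfPath.ext' fun m n hmn => ?_
    have hble : (n + Λ.d lam) ≤ Λ.d (Λ.comp lam (x.seg 0 (n + Λ.d lam) zero_le)) := by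
      rw [Λ.d_comp _ _ (concat_hsr h _), x.d_seg]
      intro i
      simp only [Pi.add_apply, Pi.sub_apply, Pi.zero_apply]
      omega
    show Λ.mid (Λ.comp lam (x.seg 0 (n + Λ.d lam) zero_le))
      (m + Λ.d lam) (n + Λ.d lam) (add_le_add hmn le_rfl) hble = x.seg m n hmn
    refine (Λ.mid_unique (add_le_add hmn le_rfl) hble
      (η := Λ.comp lam (x.seg 0 m zero_le))
      (ζ := x.seg n (n + Λ.d lam) le_self_add) ?_ (x.src m n (n + Λ.d lam) hmn le_self_add)
      ?_ ?_ ?_).symm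
    · rw [Λ.s_comp _ _ (concat_hsr h m)]
      exact x.src 0 m n zero_le hmn
    · rw [Λ.d_comp _ _ (concat_hsr h m), x.d_seg]
      funext i
      simp only [Pi.add_apply, Pi.sub_apply, Pi.zero_apply]
      omega
    · rw [x.d_seg]
      funext i
      have h1 : m i ≤ n i := hmn i
      simp only [Pi.add_apply, Pi.sub_apply]
      omega
    · rw [x.comp_seg m n (n + Λ.d lam) hmn le_self_add,
        Λ.comp_assoc _ _ _ (concat_hsr h m)
          (x.src 0 m (n + Λ.d lam) zero_le (hmn.trans le_self_add)),
        x.comp_seg 0 m (n + Λ.d lam) zero_le (hmn.trans le_self_add)]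

lemma exists_infPath (hrf : RowFiniteNoSources Λ) (v : V) :
    ∃ x : InfPath Λ, x.range = v := by
  classical
  have hedg : ∀ w : V, ∃ e : E, Λ.r e = w ∧ Λ.d e = (fun _ => 1) := fun w => by
    simpa [Set.Nonempty, Set.mem_setOf_eq] using (hrf w (fun _ => 1)).2
  choose edg hedgr hedgd using hedg
  let P : ℕ → E := fun j => Nat.rec (Λ.vert v) (fun _ p => Λ.comp p (edg (Λ.s p))) j
  have hP0 : P 0 = Λ.vert v := rfl
  have hPs : ∀ j, P (j+1) = Λ.comp (P j) (edg (Λ.s (P j))) := fun j => rfl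
  have hcond : ∀ j, Λ.s (P j) = Λ.r (edg (Λ.s (P j))) := fun j => (hedgr _).symm
  have hPr : ∀ j, Λ.r (P j) = v := by
    intro j; induction j with
    | zero => exact Λ.r_vert v
    | succ j ih => rw [hPs j, Λ.r_comp _ _ (hcond j)]; exact ih
  have hPd : ∀ j, Λ.d (P j) = (fun _ => j) := by
    intro j; induction j with
    | zero => rw [hP0, Λ.d_vert]; rfl
    | succ j ih => rw [hPs j, Λ.d_comp _ _ (hcond j), ih, hedgd]; funext i; simp
  have hpre : ∀ j l : ℕ, ∃ ρ, Λ.s (P j) = Λ.r ρ ∧ P (j + l) = Λ.comp (P j) ρ := by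
    intro j l; induction l with
    | zero => exact ⟨Λ.vert (Λ.s (P j)), (Λ.r_vert _).symm, (Λ.comp_vert _).symm⟩
    | succ l ih =>
      obtain ⟨ρ, h1, h2⟩ := ih
      have hsρ : Λ.s ρ = Λ.r (edg (Λ.s (P (j+l)))) := by
        rw [← hcond (j+l), h2, Λ.s_comp _ _ h1]
      refine ⟨Λ.comp ρ (edg (Λ.s (P (j+l)))), ?_, ?_⟩
      · rw [Λ.r_comp _ _ hsρ]; exact h1
      · show P (j + l + 1) = _
        rw [hPs (j+l), h2]
        exact Λ.comp_assoc _ _ _ h1 (by rw [← h2]; exact hsρ)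
  have hle : ∀ n : Fin k → ℕ, n ≤ Λ.d (P (∑ i, n i)) := by
    intro n
    rw [hPd]
    intro i
    exact Finset.single_le_sum (f := n) (fun _ _ => Nat.zero_le _) (Finset.mem_univ i)
  have hcompat : ∀ m n : Fin k → ℕ, m ≤ n → ∃ ρ, Λ.s (P (∑ i, m i)) = Λ.r ρ ∧
      P (∑ i, n i) = Λ.comp (P (∑ i, m i)) ρ := by
    intro m n hmn
    have hsum : (∑ i, m i) ≤ ∑ i, n i := Finset.sum_le_sum (fun i _ => hmn i)
    obtain ⟨ρ, h1, h2⟩ := hpre (∑ i, m i) (∑ i, n i - ∑ i, m i)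
    refine ⟨ρ, h1, ?_⟩
    rwa [Nat.add_sub_cancel' hsum] at h2
  refine ⟨Λ.ofApprox (fun n => P (∑ i, n i)) hle hcompat, ?_⟩
  rw [Λ.ofApprox_range]
  simp only [Pi.zero_apply, Finset.sum_const_zero]
  exact hPr 0

end Aux3


section Aux4

variable {Λ : PGraphStr (Fin k → ℕ) V E}

lemma ckeq_sigma {μ ν : E} (h : CKeq Λ μ ν) :
    ∀ x : InfPath Λ, x.range = Λ.s μ → x.shift (Λ.d μ) = x.shift (Λ.d ν) := by
  intro x hx
  have hμ : Λ.s μ = x.range := hx.symm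
  have hν : Λ.s ν = x.range := h.1.symm.trans hx.symm
  have hyz : Λ.concat μ x hμ = Λ.concat ν x hν :=
    h.2 x _ _ hx (Λ.concat_extends μ x hμ) (Λ.concat_extends ν x hν)
  have e1 : (Λ.concat μ x hμ).shift (Λ.d μ) = x := (Λ.concat_extends μ x hμ).2
  have e2 : (Λ.concat μ x hμ).shift (Λ.d ν) = x := by
    rw [hyz]; exact (Λ.concat_extends ν x hν).2
  calc x.shift (Λ.d μ) = ((Λ.concat μ x hμ).shift (Λ.d ν)).shift (Λ.d μ) := by rw [e2]
    _ = (Λ.concat μ x hμ).shift (Λ.d μ + Λ.d ν) := InfPath.shift_shift _ _ _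
    _ = (Λ.concat μ x hμ).shift (Λ.d ν + Λ.d μ) := by rw [add_comm]
    _ = ((Λ.concat μ x hμ).shift (Λ.d μ)).shift (Λ.d ν) := (InfPath.shift_shift _ _ _).symm
    _ = x.shift (Λ.d ν) := by rw [e1]

lemma sigma_transport {p q : Fin k → ℕ} {v : V} (lam : E) (hv : Λ.r lam = v)
    (hSig : ∀ x : InfPath Λ, x.range = v → x.shift p = x.shift q) :
    ∀ x : InfPath Λ, x.range = Λ.s lam → x.shift p = x.shift q := by
  intro x hx
  have hμ : Λ.s lam = x.range := hx.symm
  set y := Λ.concat lam x hμ with hy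
  have hyr : y.range = v := (Λ.concat_range lam x hμ).trans hv
  have e1 : y.shift (Λ.d lam) = x := (Λ.concat_extends lam x hμ).2
  have h2 := hSig y hyr
  calc x.shift p = (y.shift (Λ.d lam)).shift p := by rw [e1]
    _ = y.shift (p + Λ.d lam) := InfPath.shift_shift _ _ _
    _ = y.shift (Λ.d lam + p) := by rw [add_comm]
    _ = (y.shift p).shift (Λ.d lam) := (InfPath.shift_shift _ _ _).symm
    _ = (y.shift q).shift (Λ.d lam) := by rw [h2]
    _ = y.shift (Λ.d lam + q) := InfPath.shift_shift _ _ _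
    _ = y.shift (q + Λ.d lam) := by rw [add_comm]
    _ = (y.shift (Λ.d lam)).shift q := (InfPath.shift_shift _ _ _).symm
    _ = x.shift q := by rw [e1]

lemma sigma_add {v : V} {p q p' q' : Fin k → ℕ}
    (h1 : ∀ x : InfPath Λ, x.range = v → x.shift p = x.shift q)
    (h2 : ∀ x : InfPath Λ, x.range = v → x.shift p' = x.shift q') :
    ∀ x : InfPath Λ, x.range = v → x.shift (p + p') = x.shift (q + q') := by
  intro x hx
  have hq : Λ.r (x.seg 0 q zero_le) = v := (x.range_r q).trans hx
  have h2' := sigma_transport (x.seg 0 q zero_le) hq h2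
  have hr : (x.shift q).range = Λ.s (x.seg 0 q zero_le) := x.shift_range q
  calc x.shift (p + p') = x.shift (p' + p) := by rw [add_comm]
    _ = (x.shift p).shift p' := (InfPath.shift_shift _ _ _).symm
    _ = (x.shift q).shift p' := by rw [h1 x hx]
    _ = (x.shift q).shift q' := h2' (x.shift q) hr
    _ = x.shift (q' + q) := InfPath.shift_shift _ _ _
    _ = x.shift (q + q') := by rw [add_comm]

lemma sigma_to_per (hrf : RowFiniteNoSources Λ) {v : V} {p q : Fin k → ℕ}
    (hSig : ∀ x : InfPath Λ, x.range = v → x.shift p = x.shift q) :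
    (fun i => (q i : ℤ) - (p i : ℤ)) ∈ PerSet Λ := by
  obtain ⟨x₀, hx₀⟩ := exists_infPath (Λ := Λ) hrf v
  set N := p + q with hN
  have hpN : p ≤ N := le_self_add
  have hqN : q ≤ N := le_add_self
  set μ := x₀.seg p N hpN with hμd
  set ν := x₀.seg q N hqN with hνd
  have hdμ : Λ.d μ = N - p := x₀.d_seg p N hpN
  have hdν : Λ.d ν = N - q := x₀.d_seg q N hqN
  refine ⟨μ, ν, ⟨?_, ?_⟩, ?_⟩
  · rw [hμd, hνd, x₀.s_seg p N hpN, x₀.s_seg q N hqN]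
  · intro zp y z hz hy hz'
    have hsμ : Λ.s μ = zp.range := hz.symm
    set Y := Λ.concat μ zp hsμ with hY
    have hWs : Λ.s (x₀.seg 0 p zero_le) = Y.range := by
      rw [Λ.concat_range, hμd]
      exact x₀.src 0 p N zero_le hpN
    set W := Λ.concat (x₀.seg 0 p zero_le) Y hWs with hW
    have e₁ : Λ.d (x₀.seg 0 p zero_le) = p := by
      rw [x₀.d_seg]; funext i; simp
    have hWp : W.shift p = Y := by
      have h' := (Λ.concat_extends _ Y hWs).2
      rwa [e₁] at h'
    have hWr : W.range = v := by
      rw [Λ.concat_range, x₀.range_r, hx₀]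
    have hWq : W.shift q = Y := (hSig W hWr).symm.trans hWp
    have hW0p : W.seg 0 p zero_le = x₀.seg 0 p zero_le := by
      have h' := (Λ.concat_extends _ Y hWs).1
      rw [← h']
      exact W.seg_congr _ _ rfl e₁.symm
    have hWpN : W.seg p N hpN = μ := by
      have h0 : (W.shift p).seg 0 (Λ.d μ) zero_le = μ := by
        rw [hWp]; exact (Λ.concat_extends μ zp hsμ).1
      rw [InfPath.shift_seg] at h0
      rw [← h0]
      refine W.seg_congr _ _ (zero_add p).symm ?_
      rw [hdμ]; funext i
      have hh : p i ≤ N i := hpN i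
      simp only [Pi.add_apply, Pi.sub_apply]
      omega
    have hpre : W.seg 0 N zero_le = x₀.seg 0 N zero_le := by
      rw [← W.comp_seg 0 p N zero_le hpN, hW0p, hWpN, hμd,
        x₀.comp_seg 0 p N zero_le hpN]
    have part1 : Y.seg 0 (Λ.d ν) zero_le = ν := by
      have h0 : Y.seg 0 (Λ.d ν) zero_le = (W.shift q).seg 0 (Λ.d ν) zero_le := by
        rw [hWq]
      rw [h0, InfPath.shift_seg]
      have h1 : W.seg (0 + q) (Λ.d ν + q) (add_le_add zero_le le_rfl) =
          W.seg q N hqN := by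
        refine W.seg_congr _ _ (zero_add q) ?_
        rw [hdν]; funext i
        have hh : q i ≤ N i := hqN i
        simp only [Pi.add_apply, Pi.sub_apply]
        omega
      rw [h1, hνd]
      exact InfPath.seg_determines q N N hqN le_rfl hpre
    have part2 : Y.shift (Λ.d ν) = zp := by
      have h0 : Y.shift (Λ.d ν) = W.shift (Λ.d ν + q) := by
        rw [← hWq, InfPath.shift_shift]
      have h1 : (Λ.d ν + q) = (Λ.d μ + p) := by
        rw [hdμ, hdν]; funext i
        have hh1 : p i ≤ N i := hpN i
        have hh2 : q i ≤ N i := hqN i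
        simp only [Pi.add_apply, Pi.sub_apply]
        omega
      rw [h0, h1, ← InfPath.shift_shift, hWp]
      exact (Λ.concat_extends μ zp hsμ).2
    have hy' : y = Y := extends_unique hy (Λ.concat_extends μ zp hsμ)
    have hz'' : z = Y := extends_unique hz' ⟨part1, part2⟩
    rw [hy', hz'']
  · funext i
    have h1 := congrFun hdμ i
    have h2 := congrFun hdν i
    have h3 : N i = p i + q i := rfl
    rw [h1, h2]
    simp only [Pi.sub_apply]
    omega

end Aux4


/-- If `Λ` is a row-finite `k`-graph with no sources such that `Λ⁰` is a maximal tail,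
then `Per(Λ) = {d(μ) - d(ν) : μ ∼ ν}` is a subgroup of `ℤ^k`. -/
theorem stmt8 (k : ℕ) (V E : Type) [Countable E] (Λ : PGraphStr (Fin k → ℕ) V E)
    (hrf : RowFiniteNoSources Λ) (hmt : IsMaximalTail Λ Set.univ) :
    ∃ G : AddSubgroup (Fin k → ℤ), (G : Set (Fin k → ℤ)) = PerSet Λ := by
  obtain ⟨v0, -⟩ := hmt.1
  refine ⟨{ carrier := PerSet Λ
            zero_mem' := ?_
            add_mem' := ?_
            neg_mem' := ?_ }, rfl⟩
  · rintro _ _ ⟨μ, ν, h1, rfl⟩ ⟨α, β, h2, rfl⟩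
    have hSig1 := ckeq_sigma h1
    have hSig2 := ckeq_sigma h2
    obtain ⟨z, -, ⟨e1, he1r, he1s⟩, ⟨e2, he2r, he2s⟩⟩ :=
      hmt.2.1 (Λ.s μ) (Set.mem_univ _) (Λ.s α) (Set.mem_univ _)
    have hA : ∀ x : InfPath Λ, x.range = z → x.shift (Λ.d μ) = x.shift (Λ.d ν) :=
      fun x hx => sigma_transport e1 he1r hSig1 x (by rw [he1s]; exact hx)
    have hB : ∀ x : InfPath Λ, x.range = z → x.shift (Λ.d α) = x.shift (Λ.d β) :=
      fun x hx => sigma_transport e2 he2r hSig2 x (by rw [he2s]; exact hx)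
    have hsum : ∀ x : InfPath Λ, x.range = z →
        x.shift (Λ.d ν + Λ.d β) = x.shift (Λ.d μ + Λ.d α) :=
      sigma_add (fun x hx => (hA x hx).symm) (fun x hx => (hB x hx).symm)
    have hper := sigma_to_per hrf hsum
    have heq : ((fun i => (Λ.d μ i : ℤ) - (Λ.d ν i : ℤ)) +
        fun i => (Λ.d α i : ℤ) - (Λ.d β i : ℤ)) =
        fun i => (((Λ.d μ + Λ.d α) i : ℤ)) - ((Λ.d ν + Λ.d β) i : ℤ) := by
      funext i
      simp only [Pi.add_apply]
      push_cast
      ring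
    rw [heq]
    exact hper
  · refine ⟨Λ.vert v0, Λ.vert v0, ⟨rfl, ?_⟩, ?_⟩
    · intro x y z hx hy hz
      have hy2 := hy.2
      have hz2 := hz.2
      rw [Λ.d_vert] at hy2 hz2
      exact ((InfPath.shift_zero y).symm.trans hy2).trans
        (((InfPath.shift_zero z).symm.trans hz2)).symm
    · funext i
      simp [Λ.d_vert]
  · rintro _ ⟨μ, ν, ⟨hs, hmain⟩, rfl⟩
    refine ⟨ν, μ, ⟨hs.symm, ?_⟩, ?_⟩
    · intro x y z hx hy hz
      exact (hmain x z y (hx.trans hs.symm) hz hy).symm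
    · funext i
      simp
end

section
/- Let Λ be a row-finite k-graph with no sources such that Λ⁰ is a maximal tail. Let Σ_Λ = ⋃_{v ∈ Λ⁰} Σ_v, where Σ_v = {(p,q) : σ^p(x) = σ^q(x) for all x ∈ vΛ^∞}. Then Σ_Λ is an equivalence relation on ℕ^k and a submonoid of ℕ^k × ℕ^k. -/
variable {k : ℕ} {V E : Type}

section Aux

variable {k : ℕ} {V E : Type}

namespace PGraphStr

lemma sub_add_cancel'' {m n : Fin k → ℕ} (h : m ≤ n) : m + (n - m) = n := by
  funext i; exact Nat.add_sub_cancel' (h i)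

/-- Unique factorisation, packaged as a function. -/
noncomputable def fac (Λ : PGraphStr (Fin k → ℕ) V E) (ξ : E) (m : Fin k → ℕ)
    (h : m ≤ Λ.d ξ) : E × E :=
  (Λ.factor ξ m (Λ.d ξ - m) (sub_add_cancel'' h).symm).choose

lemma fac_spec (Λ : PGraphStr (Fin k → ℕ) V E) (ξ : E) (m : Fin k → ℕ)
    (h : m ≤ Λ.d ξ) :
    Λ.s (Λ.fac ξ m h).1 = Λ.r (Λ.fac ξ m h).2 ∧ Λ.d (Λ.fac ξ m h).1 = m ∧
    Λ.d (Λ.fac ξ m h).2 = Λ.d ξ - m ∧ Λ.comp (Λ.fac ξ m h).1 (Λ.fac ξ m h).2 = ξ :=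
  (Λ.factor ξ m (Λ.d ξ - m) (sub_add_cancel'' h).symm).choose_spec.1

lemma fac_eq (Λ : PGraphStr (Fin k → ℕ) V E) (ξ a b : E) (m : Fin k → ℕ)
    (hab : Λ.s a = Λ.r b) (hc : Λ.comp a b = ξ) (hm : Λ.d a = m) (h : m ≤ Λ.d ξ) :
    Λ.fac ξ m h = (a, b) := by
  subst hm
  have hd : Λ.d ξ = Λ.d a + Λ.d b := by rw [← hc]; exact Λ.d_comp a b hab
  have hb : Λ.d b = Λ.d ξ - Λ.d a := by rw [hd]; funext i; simp
  exact ((Λ.factor ξ (Λ.d a) (Λ.d ξ - Λ.d a) (sub_add_cancel'' h).symm).choose_spec.2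
    (a, b) ⟨hab, rfl, hb, hc⟩).symm

lemma eq_vert_of_d_zero (Λ : PGraphStr (Fin k → ℕ) V E) (μ : E) (h : Λ.d μ = 0) :
    μ = Λ.vert (Λ.r μ) := by
  have h0 : (0 : Fin k → ℕ) ≤ Λ.d μ := by rw [h]
  have h1 := Λ.fac_eq μ (Λ.vert (Λ.r μ)) μ 0 (by rw [Λ.s_vert])
    (Λ.vert_comp μ) (Λ.d_vert _) h0
  have h2 := Λ.fac_eq μ μ (Λ.vert (Λ.s μ)) 0 (by rw [Λ.r_vert]) (Λ.comp_vert μ) h h0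
  exact (congrArg Prod.fst (h1.symm.trans h2)).symm

/-- The segment `ξ(m,n)` of a finite path `ξ`. -/
noncomputable def seg' (Λ : PGraphStr (Fin k → ℕ) V E) (ξ : E) (m n : Fin k → ℕ)
    (h1 : m ≤ n) (h2 : n ≤ Λ.d ξ) : E :=
  (Λ.fac (Λ.fac ξ m (h1.trans h2)).2 (n - m) (by
    rw [(Λ.fac_spec ξ m (h1.trans h2)).2.2.1]
    intro i; exact Nat.sub_le_sub_right (h2 i) (m i))).1

lemma d_seg' (Λ : PGraphStr (Fin k → ℕ) V E) (ξ : E) (m n : Fin k → ℕ)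
    (h1 : m ≤ n) (h2 : n ≤ Λ.d ξ) : Λ.d (Λ.seg' ξ m n h1 h2) = n - m :=
  (Λ.fac_spec _ _ _).2.1

/-- Uniqueness characterisation: if `ξ = a(bc)` with `d a = m`, `d b = n - m`,
then `ξ(m,n) = b`. -/
lemma seg'_eq (Λ : PGraphStr (Fin k → ℕ) V E) (ξ a b c : E) (m n : Fin k → ℕ)
    (h1 : m ≤ n) (h2 : n ≤ Λ.d ξ)
    (hda : Λ.d a = m) (hdb : Λ.d b = n - m)
    (hab : Λ.s a = Λ.r b) (hbc : Λ.s b = Λ.r c)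
    (hcomp : Λ.comp a (Λ.comp b c) = ξ) :
    Λ.seg' ξ m n h1 h2 = b := by
  have hrbc : Λ.r (Λ.comp b c) = Λ.r b := Λ.r_comp b c hbc
  have hfac1 : Λ.fac ξ m (h1.trans h2) = (a, Λ.comp b c) :=
    Λ.fac_eq ξ a (Λ.comp b c) m (hab.trans hrbc.symm) hcomp hda (h1.trans h2)
  have key : ∀ (z : E) (_ : z = Λ.comp b c) (hle : n - m ≤ Λ.d z),
      (Λ.fac z (n - m) hle).1 = b := by
    intro z hz hle
    subst hz
    rw [Λ.fac_eq (Λ.comp b c) b c (n - m) hbc rfl hdb hle]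
  show (Λ.fac (Λ.fac ξ m (h1.trans h2)).2 (n - m) _).1 = b
  exact key _ (by rw [hfac1]) _

/-- Every segment sits in a decomposition `ξ = a(ξ(m,n)c)`. -/
lemma seg'_decomp (Λ : PGraphStr (Fin k → ℕ) V E) (ξ : E) (m n : Fin k → ℕ)
    (h1 : m ≤ n) (h2 : n ≤ Λ.d ξ) :
    ∃ a c : E, Λ.d a = m ∧ Λ.s a = Λ.r (Λ.seg' ξ m n h1 h2) ∧
      Λ.s (Λ.seg' ξ m n h1 h2) = Λ.r c ∧
      Λ.comp a (Λ.comp (Λ.seg' ξ m n h1 h2) c) = ξ := by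
  obtain ⟨hab, hda, hdb, hcab⟩ := Λ.fac_spec ξ m (h1.trans h2)
  have hnm : n - m ≤ Λ.d (Λ.fac ξ m (h1.trans h2)).2 := by
    rw [hdb]; intro i; exact Nat.sub_le_sub_right (h2 i) (m i)
  obtain ⟨hcd, hdc, hdd, hccd⟩ := Λ.fac_spec (Λ.fac ξ m (h1.trans h2)).2 (n - m) hnm
  have hseg : Λ.seg' ξ m n h1 h2 =
      (Λ.fac (Λ.fac ξ m (h1.trans h2)).2 (n - m) hnm).1 := rfl
  refine ⟨(Λ.fac ξ m (h1.trans h2)).1,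
    (Λ.fac (Λ.fac ξ m (h1.trans h2)).2 (n - m) hnm).2, hda, ?_, ?_, ?_⟩
  · have h := Λ.r_comp _ _ hcd
    rw [hccd] at h
    rw [hseg, hab, h]
  · rw [hseg]; exact hcd
  · rw [hseg, hccd]; exact hcab

lemma r_seg'_zero (Λ : PGraphStr (Fin k → ℕ) V E) (ξ : E) (n : Fin k → ℕ)
    (h1 : 0 ≤ n) (h2 : n ≤ Λ.d ξ) : Λ.r (Λ.seg' ξ 0 n h1 h2) = Λ.r ξ := by
  obtain ⟨a, c, hda, hax, hxc, hcomp⟩ := Λ.seg'_decomp ξ 0 n h1 h2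
  have hva := Λ.eq_vert_of_d_zero a hda
  have hsa : Λ.s a = Λ.r a := by rw [hva, Λ.s_vert, Λ.r_vert]
  have hax' : Λ.s a = Λ.r (Λ.comp (Λ.seg' ξ 0 n h1 h2) c) := by
    rw [hax]; exact (Λ.r_comp _ _ hxc).symm
  have hr : Λ.r ξ = Λ.r a := by rw [← hcomp]; exact Λ.r_comp _ _ hax'
  rw [hr, ← hsa, hax]

lemma seg'_src_comp (Λ : PGraphStr (Fin k → ℕ) V E) (ξ : E) (m n l : Fin k → ℕ)
    (h1 : m ≤ n) (h1' : n ≤ l) (h2 : l ≤ Λ.d ξ) :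
    Λ.s (Λ.seg' ξ m n h1 (h1'.trans h2)) = Λ.r (Λ.seg' ξ n l h1' h2) ∧
    Λ.comp (Λ.seg' ξ m n h1 (h1'.trans h2)) (Λ.seg' ξ n l h1' h2) =
      Λ.seg' ξ m l (h1.trans h1') h2 := by
  obtain ⟨a, c, hda, haQ, hQc, hcomp⟩ := Λ.seg'_decomp ξ m n h1 (h1'.trans h2)
  set Q := Λ.seg' ξ m n h1 (h1'.trans h2) with hQ
  have hdQ : Λ.d Q = n - m := Λ.d_seg' ξ m n h1 (h1'.trans h2)
  -- degree of c
  have hdξ : Λ.d ξ = Λ.d a + (Λ.d Q + Λ.d c) := by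
    rw [← hcomp, Λ.d_comp _ _ (by rw [haQ]; exact (Λ.r_comp _ _ hQc).symm),
      Λ.d_comp _ _ hQc]
  have hlc : l - n ≤ Λ.d c := by
    intro i
    have e1 := congrFun hdξ i
    simp only [Pi.add_apply] at e1
    have e2 := congrFun hda i
    have e3 := congrFun hdQ i
    simp only [Pi.sub_apply] at e3 ⊢
    have := Pi.le_def.mp h1 i; have := Pi.le_def.mp h1' i; have := Pi.le_def.mp h2 i
    omega
  obtain ⟨hRS, hdR, hdS, hcRS⟩ := Λ.fac_spec c (l - n) hlc
  set R := (Λ.fac c (l - n) hlc).1 with hR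
  set S := (Λ.fac c (l - n) hlc).2 with hS
  have hrc : Λ.r c = Λ.r R := by rw [← hcRS]; exact Λ.r_comp _ _ hRS
  have hQR : Λ.s Q = Λ.r R := hQc.trans hrc
  have haQ' : Λ.s a = Λ.r Q := haQ
  -- seg' ξ n l = R
  have hsegR : Λ.seg' ξ n l h1' h2 = R := by
    apply Λ.seg'_eq ξ (Λ.comp a Q) R S n l h1' h2
    · rw [Λ.d_comp a Q haQ', hda, hdQ, sub_add_cancel'' h1]
    · funext i; simp only [Pi.sub_apply]
      have := congrFun hdR i; simp only [Pi.sub_apply] at this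
      omega
    · rw [Λ.s_comp a Q haQ']; exact hQR
    · exact hRS
    · rw [hcRS, Λ.comp_assoc a Q c haQ' hQc]; exact hcomp
  have hsegQR : Λ.seg' ξ m l (h1.trans h1') h2 = Λ.comp Q R := by
    apply Λ.seg'_eq ξ a (Λ.comp Q R) S m l (h1.trans h1') h2 hda
    · rw [Λ.d_comp Q R hQR, hdQ, hdR]
      funext i
      simp only [Pi.add_apply, Pi.sub_apply]
      have := Pi.le_def.mp h1 i; have := Pi.le_def.mp h1' i; have := Pi.le_def.mp h2 i
      omega
    · rw [haQ]
      exact (Λ.r_comp Q R hQR).symm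
    · rw [Λ.s_comp Q R hQR]; exact hRS
    · rw [Λ.comp_assoc Q R S hQR hRS, hcRS]; exact hcomp
  constructor
  · rw [hsegR]; exact hQR
  · rw [hsegR, hsegQR]

lemma seg'_comp_left (Λ : PGraphStr (Fin k → ℕ) V E) (ξ η : E) (hξη : Λ.s ξ = Λ.r η)
    (m n : Fin k → ℕ) (h1 : m ≤ n) (h2 : n ≤ Λ.d ξ)
    (h2' : n ≤ Λ.d (Λ.comp ξ η)) :
    Λ.seg' (Λ.comp ξ η) m n h1 h2' = Λ.seg' ξ m n h1 h2 := by
  obtain ⟨a, c, hda, haQ, hQc, hcomp⟩ := Λ.seg'_decomp ξ m n h1 h2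
  set Q := Λ.seg' ξ m n h1 h2 with hQ
  have hdQ : Λ.d Q = n - m := Λ.d_seg' ξ m n h1 h2
  have hsc : Λ.s c = Λ.r η := by
    rw [← hξη, ← hcomp, Λ.s_comp _ _ (by rw [haQ]; exact (Λ.r_comp _ _ hQc).symm),
      Λ.s_comp _ _ hQc]
  apply Λ.seg'_eq (Λ.comp ξ η) a Q (Λ.comp c η) m n h1 h2' hda hdQ haQ
  · rw [hQc]; exact (Λ.r_comp c η hsc).symm
  · rw [← Λ.comp_assoc Q c η hQc hsc,
      ← Λ.comp_assoc a (Λ.comp Q c) η (by rw [haQ]; exact (Λ.r_comp _ _ hQc).symm)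
        (by rw [Λ.s_comp _ _ hQc]; exact hsc), hcomp]

lemma seg'_comp_right (Λ : PGraphStr (Fin k → ℕ) V E) (ξ η : E) (hξη : Λ.s ξ = Λ.r η)
    (m n : Fin k → ℕ) (h1 : Λ.d ξ + m ≤ Λ.d ξ + n) (h2 : n ≤ Λ.d η)
    (h2' : Λ.d ξ + n ≤ Λ.d (Λ.comp ξ η))
    (hmn : m ≤ n) :
    Λ.seg' (Λ.comp ξ η) (Λ.d ξ + m) (Λ.d ξ + n) h1 h2' =
      Λ.seg' η m n hmn h2 := by
  obtain ⟨a, c, hda, haQ, hQc, hcomp⟩ := Λ.seg'_decomp η m n hmn h2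
  set Q := Λ.seg' η m n hmn h2 with hQ
  have hdQ : Λ.d Q = n - m := Λ.d_seg' η m n hmn h2
  have hra : Λ.s ξ = Λ.r a := by
    rw [hξη, ← hcomp]
    exact Λ.r_comp _ _ (by rw [haQ]; exact (Λ.r_comp _ _ hQc).symm)
  apply Λ.seg'_eq (Λ.comp ξ η) (Λ.comp ξ a) Q c (Λ.d ξ + m) (Λ.d ξ + n) h1 h2'
  · rw [Λ.d_comp ξ a hra, hda]
  · rw [hdQ]; funext i
    simp only [Pi.sub_apply, Pi.add_apply]
    omega
  · rw [Λ.s_comp ξ a hra]; exact haQ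
  · exact hQc
  · rw [Λ.comp_assoc ξ a _ hra (by rw [haQ]; exact (Λ.r_comp _ _ hQc).symm), hcomp]

end PGraphStr

namespace InfPath

theorem ext'_s11 {Λ : PGraphStr (Fin k → ℕ) V E} {x y : InfPath Λ}
    (h : ∀ m n (hmn : m ≤ n), x.seg m n hmn = y.seg m n hmn) : x = y := by
  cases x with
  | mk xs xd xsrc xself xcomp =>
    cases y with
    | mk ys yd ysrc yself ycomp =>
      have : xs = ys := by
        funext m n hmn; exact h m n hmn
      subst this
      rfl

theorem seg_congr_s11 {Λ : PGraphStr (Fin k → ℕ) V E} (x : InfPath Λ)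
    {m n m' n' : Fin k → ℕ} (hm : m = m') (hn : n = n') (h : m ≤ n) :
    x.seg m n h = x.seg m' n' (hm ▸ hn ▸ h) := by
  subst hm; subst hn; rfl

theorem shift_congr {Λ : PGraphStr (Fin k → ℕ) V E} (x : InfPath Λ)
    {a a' : Fin k → ℕ} (h : a = a') : x.shift a = x.shift a' := by subst h; rfl

theorem shift_shift_s11 {Λ : PGraphStr (Fin k → ℕ) V E} (x : InfPath Λ) (a b : Fin k → ℕ) :
    (x.shift a).shift b = x.shift (b + a) := by
  apply ext'_s11
  intro m n hmn
  show x.seg (m + b + a) (n + b + a) _ = x.seg (m + (b + a)) (n + (b + a)) _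
  exact x.seg_congr_s11 (add_assoc m b a) (add_assoc n b a) _

theorem r_seg_zero {Λ : PGraphStr (Fin k → ℕ) V E} (x : InfPath Λ) (n : Fin k → ℕ)
    (h : (0 : Fin k → ℕ) ≤ n) : Λ.r (x.seg 0 n h) = x.range := by
  have h1 := x.src 0 0 n le_rfl h
  have h2 := x.seg_self 0
  rw [← h1, h2, Λ.s_vert]
  rfl

theorem seg'_seg {Λ : PGraphStr (Fin k → ℕ) V E} (x : InfPath Λ) (m n N : Fin k → ℕ)
    (h1 : m ≤ n) (h2 : n ≤ N) (h0 : (0:Fin k → ℕ) ≤ N)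
    (h2' : n ≤ Λ.d (x.seg 0 N h0)) :
    Λ.seg' (x.seg 0 N h0) m n h1 h2' = x.seg m n h1 := by
  apply Λ.seg'_eq (x.seg 0 N h0) (x.seg 0 m zero_le) (x.seg m n h1)
    (x.seg n N h2) m n h1 h2'
  · rw [x.d_seg]; funext i; simp
  · exact x.d_seg m n h1
  · exact x.src 0 m n zero_le h1
  · exact x.src m n N h1 h2
  · rw [x.comp_seg m n N h1 h2, x.comp_seg 0 m N zero_le (h1.trans h2)]

end InfPath

namespace PGraphStr

variable (Λ : PGraphStr (Fin k → ℕ) V E)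

/-- The big initial chunk `e · x(0, N - d e)`. -/
noncomputable def big (e : E) (x : InfPath Λ) (N : Fin k → ℕ) : E :=
  Λ.comp e (x.seg 0 (N - Λ.d e) zero_le)

lemma big_compat (e : E) (x : InfPath Λ) (hx : x.range = Λ.s e) (N : Fin k → ℕ) :
    Λ.s e = Λ.r (x.seg 0 (N - Λ.d e) zero_le) := by
  rw [x.r_seg_zero, hx]

lemma d_big (e : E) (x : InfPath Λ) (hx : x.range = Λ.s e) (N : Fin k → ℕ)
    (hN : Λ.d e ≤ N) : Λ.d (Λ.big e x N) = N := by
  rw [big, Λ.d_comp _ _ (Λ.big_compat e x hx N), x.d_seg]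
  funext i
  have := Pi.le_def.mp hN i
  simp only [Pi.add_apply, Pi.sub_apply, Pi.zero_apply]
  omega

lemma big_consistent (e : E) (x : InfPath Λ) (hx : x.range = Λ.s e)
    (N N' m n : Fin k → ℕ) (hN : Λ.d e ≤ N) (hNN : N ≤ N') (h1 : m ≤ n) (hn : n ≤ N)
    (h2 : n ≤ Λ.d (Λ.big e x N)) (h2' : n ≤ Λ.d (Λ.big e x N')) :
    Λ.seg' (Λ.big e x N') m n h1 h2' = Λ.seg' (Λ.big e x N) m n h1 h2 := by
  have hsub : N - Λ.d e ≤ N' - Λ.d e := fun i => Nat.sub_le_sub_right (hNN i) _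
  have hbig' : Λ.big e x N' = Λ.comp (Λ.big e x N)
      (x.seg (N - Λ.d e) (N' - Λ.d e) hsub) := by
    rw [big, big, ← x.comp_seg 0 (N - Λ.d e) (N' - Λ.d e) zero_le hsub,
      ← Λ.comp_assoc e _ _ (Λ.big_compat e x hx N)
        (x.src 0 (N - Λ.d e) (N' - Λ.d e) zero_le hsub)]
  have hs : Λ.s (Λ.big e x N) = Λ.r (x.seg (N - Λ.d e) (N' - Λ.d e) hsub) := by
    rw [big, Λ.s_comp _ _ (Λ.big_compat e x hx N)]
    exact x.src 0 (N - Λ.d e) (N' - Λ.d e) zero_le hsub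
  have key : ∀ (z : E)
      (hz : z = Λ.comp (Λ.big e x N) (x.seg (N - Λ.d e) (N' - Λ.d e) hsub))
      (hle : n ≤ Λ.d z),
      Λ.seg' z m n h1 hle = Λ.seg' (Λ.big e x N) m n h1 h2 := by
    intro z hz hle
    subst hz
    exact Λ.seg'_comp_left _ _ hs m n h1 (by rw [Λ.d_big e x hx N hN]; exact hn) hle
  exact key _ hbig' h2'

lemma n_le_d_big (e : E) (x : InfPath Λ) (hx : x.range = Λ.s e) (n : Fin k → ℕ) :
    n ≤ Λ.d (Λ.big e x (n ⊔ Λ.d e)) := by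
  rw [Λ.d_big e x hx _ le_sup_right]; exact le_sup_left

/-- Prepending a finite path `e` to an infinite path `x` with `x.range = s e`. -/
noncomputable def prepend (e : E) (x : InfPath Λ) (hx : x.range = Λ.s e) :
    InfPath Λ where
  seg m n h := Λ.seg' (Λ.big e x (n ⊔ Λ.d e)) m n h (Λ.n_le_d_big e x hx n)
  d_seg m n h := Λ.d_seg' _ m n h _
  src m n p h₁ h₂ := by
    beta_reduce
    rw [← Λ.big_consistent e x hx (n ⊔ Λ.d e) (p ⊔ Λ.d e) m n le_sup_right
      (sup_le_sup_right h₂ _) h₁ le_sup_left (Λ.n_le_d_big e x hx n)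
      (by rw [Λ.d_big e x hx _ le_sup_right]; exact h₂.trans le_sup_left)]
    exact (Λ.seg'_src_comp _ m n p h₁ h₂
      (by rw [Λ.d_big e x hx _ le_sup_right]; exact le_sup_left)).1
  seg_self m := by
    apply Λ.eq_vert_of_d_zero
    rw [Λ.d_seg']
    funext i; simp
  comp_seg m n p h₁ h₂ := by
    beta_reduce
    rw [← Λ.big_consistent e x hx (n ⊔ Λ.d e) (p ⊔ Λ.d e) m n le_sup_right
      (sup_le_sup_right h₂ _) h₁ le_sup_left (Λ.n_le_d_big e x hx n)
      (by rw [Λ.d_big e x hx _ le_sup_right]; exact h₂.trans le_sup_left)]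
    exact (Λ.seg'_src_comp _ m n p h₁ h₂
      (by rw [Λ.d_big e x hx _ le_sup_right]; exact le_sup_left)).2

lemma prepend_range (e : E) (x : InfPath Λ) (hx : x.range = Λ.s e) :
    (Λ.prepend e x hx).range = Λ.r e := by
  show Λ.r (Λ.seg' (Λ.big e x (0 ⊔ Λ.d e)) 0 0 le_rfl (Λ.n_le_d_big e x hx 0)) = Λ.r e
  rw [Λ.r_seg'_zero, big, Λ.r_comp _ _ (Λ.big_compat e x hx _)]

lemma prepend_shift (e : E) (x : InfPath Λ) (hx : x.range = Λ.s e) :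
    (Λ.prepend e x hx).shift (Λ.d e) = x := by
  apply InfPath.ext'_s11
  intro m n hmn
  show Λ.seg' (Λ.big e x ((n + Λ.d e) ⊔ Λ.d e)) (m + Λ.d e) (n + Λ.d e)
    (add_le_add hmn le_rfl) (Λ.n_le_d_big e x hx (n + Λ.d e)) = x.seg m n hmn
  have hsup : Λ.d e ≤ n + Λ.d e := fun i => Nat.le_add_left _ _
  rw [Λ.big_consistent e x hx (n + Λ.d e) ((n + Λ.d e) ⊔ Λ.d e) (m + Λ.d e)
    (n + Λ.d e) hsup le_sup_left (add_le_add hmn le_rfl) le_rfl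
    (by rw [Λ.d_big e x hx _ hsup])
    (Λ.n_le_d_big e x hx (n + Λ.d e))]
  -- now over big (n + d e) = comp e (x.seg 0 n)
  have hidx : (n + Λ.d e) - Λ.d e = n := by funext i; simp
  have hbig : Λ.big e x (n + Λ.d e) = Λ.comp e (x.seg 0 n zero_le) := by
    rw [big]
    congr 1
    exact x.seg_congr_s11 rfl hidx _
  have hcompat : Λ.s e = Λ.r (x.seg 0 n zero_le) := by rw [x.r_seg_zero, hx]
  have key : ∀ (z : E) (hz : z = Λ.comp e (x.seg 0 n zero_le))
      (a b : Fin k → ℕ) (ha : a = Λ.d e + m) (hb : b = Λ.d e + n)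
      (hab : a ≤ b) (hbz : b ≤ Λ.d z),
      Λ.seg' z a b hab hbz = x.seg m n hmn := by
    intro z hz a b ha hb hab hbz
    subst hz; subst ha; subst hb
    rw [Λ.seg'_comp_right e (x.seg 0 n zero_le) hcompat m n hab
      (by rw [x.d_seg]; intro i; simp) hbz hmn]
    exact x.seg'_seg m n n hmn le_rfl _ _
  exact key _ hbig (m + Λ.d e) (n + Λ.d e) (add_comm m (Λ.d e)) (add_comm n (Λ.d e))
    _ _

end PGraphStr

lemma SigmaV_hered {k : ℕ} {V E : Type} (Λ : PGraphStr (Fin k → ℕ) V E)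
    (v : V) (p q : Fin k → ℕ) (h : (p, q) ∈ SigmaV Λ v) (e : E) (he : Λ.r e = v) :
    (p, q) ∈ SigmaV Λ (Λ.s e) := by
  intro x hx
  set y := Λ.prepend e x hx with hy
  have hyr : y.range = v := by rw [hy, Λ.prepend_range, he]
  have hys : y.shift (Λ.d e) = x := Λ.prepend_shift e x hx
  have hpq : y.shift p = y.shift q := h y hyr
  calc x.shift p = (y.shift (Λ.d e)).shift p := by rw [hys]
    _ = y.shift (p + Λ.d e) := y.shift_shift_s11 _ _
    _ = y.shift (Λ.d e + p) := y.shift_congr (add_comm _ _)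
    _ = (y.shift p).shift (Λ.d e) := (y.shift_shift_s11 p (Λ.d e)).symm
    _ = (y.shift q).shift (Λ.d e) := by rw [hpq]
    _ = y.shift (Λ.d e + q) := y.shift_shift_s11 _ _
    _ = y.shift (q + Λ.d e) := y.shift_congr (add_comm _ _)
    _ = (y.shift (Λ.d e)).shift q := (y.shift_shift_s11 _ _).symm
    _ = x.shift q := by rw [hys]

lemma SigmaV_common {k : ℕ} {V E : Type} (Λ : PGraphStr (Fin k → ℕ) V E)
    (hmt : IsMaximalTail Λ Set.univ) (v₁ v₂ : V) (p q p' q' : Fin k → ℕ)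
    (h₁ : (p, q) ∈ SigmaV Λ v₁) (h₂ : (p', q') ∈ SigmaV Λ v₂) :
    ∃ w, (p, q) ∈ SigmaV Λ w ∧ (p', q') ∈ SigmaV Λ w := by
  obtain ⟨w, -, ⟨e₁, he₁r, he₁s⟩, ⟨e₂, he₂r, he₂s⟩⟩ :=
    hmt.2.1 v₁ (Set.mem_univ _) v₂ (Set.mem_univ _)
  exact ⟨w, he₁s ▸ SigmaV_hered Λ v₁ p q h₁ e₁ he₁r,
    he₂s ▸ SigmaV_hered Λ v₂ p' q' h₂ e₂ he₂r⟩

end Aux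

/-- If `Λ` is a row-finite `k`-graph with no sources such that `Λ⁰` is a maximal tail,
then `Σ_Λ = ⋃_v Σ_v` is an equivalence relation on `ℕ^k` and a submonoid of
`ℕ^k × ℕ^k`. -/
theorem stmt11 (k : ℕ) (V E : Type) [Countable E] (Λ : PGraphStr (Fin k → ℕ) V E)
    (hrf : RowFiniteNoSources Λ) (hmt : IsMaximalTail Λ Set.univ) :
    Equivalence (fun p q : Fin k → ℕ => (p, q) ∈ SigmaL Λ) ∧
    ∃ M : AddSubmonoid ((Fin k → ℕ) × (Fin k → ℕ)),
      (M : Set ((Fin k → ℕ) × (Fin k → ℕ))) = SigmaL Λ := by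
  obtain ⟨v₀, -⟩ := hmt.1
  have hrefl : ∀ p : Fin k → ℕ, (p, p) ∈ SigmaL Λ := fun p =>
    Set.mem_iUnion.2 ⟨v₀, fun x _ => rfl⟩
  have hadd2 : ∀ (w : V) (p q p' q' : Fin k → ℕ), (p, q) ∈ SigmaV Λ w →
      (p', q') ∈ SigmaV Λ w → (p + p', q + q') ∈ SigmaV Λ w := by
    intro w p q p' q' h₁ h₂ x hx
    have e₁ : x.shift p = x.shift q := h₁ x hx
    have e₂ : x.shift p' = x.shift q' := h₂ x hx
    calc x.shift (p + p') = (x.shift p').shift p := (x.shift_shift_s11 p' p).symm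
      _ = (x.shift q').shift p := by rw [e₂]
      _ = x.shift (p + q') := x.shift_shift_s11 q' p
      _ = x.shift (q' + p) := x.shift_congr (add_comm _ _)
      _ = (x.shift p).shift q' := (x.shift_shift_s11 p q').symm
      _ = (x.shift q).shift q' := by rw [e₁]
      _ = x.shift (q' + q) := x.shift_shift_s11 q q'
      _ = x.shift (q + q') := x.shift_congr (add_comm _ _)
  constructor
  · refine ⟨hrefl, ?_, ?_⟩
    · intro p q h
      obtain ⟨v, hv⟩ := Set.mem_iUnion.1 h
      exact Set.mem_iUnion.2 ⟨v, fun x hx => (hv x hx).symm⟩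
    · intro p q r h₁ h₂
      obtain ⟨v₁, hv₁⟩ := Set.mem_iUnion.1 h₁
      obtain ⟨v₂, hv₂⟩ := Set.mem_iUnion.1 h₂
      obtain ⟨w, hw₁, hw₂⟩ := SigmaV_common Λ hmt v₁ v₂ p q q r hv₁ hv₂
      exact Set.mem_iUnion.2 ⟨w, fun x hx => (hw₁ x hx).trans (hw₂ x hx)⟩
  · refine ⟨{ carrier := SigmaL Λ, zero_mem' := ?_, add_mem' := ?_ }, rfl⟩
    · intro a b ha hb
      obtain ⟨p, q⟩ := a
      obtain ⟨p', q'⟩ := b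
      have ha' : (p, q) ∈ SigmaL Λ := ha
      have hb' : (p', q') ∈ SigmaL Λ := hb
      obtain ⟨v₁, hv₁⟩ := Set.mem_iUnion.1 ha'
      obtain ⟨v₂, hv₂⟩ := Set.mem_iUnion.1 hb'
      show (p + p', q + q') ∈ SigmaL Λ
      obtain ⟨w, hw₁, hw₂⟩ := SigmaV_common Λ hmt v₁ v₂ p q p' q' hv₁ hv₂
      exact Set.mem_iUnion.2 ⟨w, hadd2 w p q p' q' hw₁ hw₂⟩
    · show (0 : (Fin k → ℕ) × (Fin k → ℕ)) ∈ SigmaL Λ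
      exact Set.mem_iUnion.2 ⟨v₀, fun x _ => rfl⟩
end

section
/- Let Λ be a row-finite k-graph with no sources such that Λ⁰ is a maximal tail, and let Σ_Λ ⊆ ℕ^k × ℕ^k be the union of the relations Σ_v. Then (Σ_Λ - Σ_Λ) ∩ (ℕ^k × ℕ^k) = Σ_Λ, where Σ_Λ - Σ_Λ denotes the set of differences taken in ℤ^k × ℤ^k. -/
variable {k : ℕ} {V E : Type}

namespace PGAux

variable {k : ℕ} {V E : Type} (Λ : PGraphStr (Fin k → ℕ) V E)

/-! ### Factorisations -/

/-- The chosen factorisation of a path. -/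
noncomputable def fac (ξ : E) (p q : Fin k → ℕ) (h : Λ.d ξ = p + q) : E × E :=
  (Λ.factor ξ p q h).choose

lemma appLe {m n : Fin k → ℕ} (h : m ≤ n) (i : Fin k) : m i ≤ n i := h i

lemma fac_spec (ξ : E) (p q : Fin k → ℕ) (h : Λ.d ξ = p + q) :
    Λ.s (fac Λ ξ p q h).1 = Λ.r (fac Λ ξ p q h).2 ∧
      Λ.d (fac Λ ξ p q h).1 = p ∧ Λ.d (fac Λ ξ p q h).2 = q ∧
      Λ.comp (fac Λ ξ p q h).1 (fac Λ ξ p q h).2 = ξ :=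
  (Λ.factor ξ p q h).choose_spec.1

lemma fac_eq {ξ : E} {p q : Fin k → ℕ} (h : Λ.d ξ = p + q) {η ζ : E}
    (h1 : Λ.s η = Λ.r ζ) (h2 : Λ.d η = p) (h3 : Λ.d ζ = q)
    (h4 : Λ.comp η ζ = ξ) : fac Λ ξ p q h = (η, ζ) :=
  ((Λ.factor ξ p q h).choose_spec.2 (η, ζ) ⟨h1, h2, h3, h4⟩).symm

lemma fac_congr {ξ ξ' : E} {p p' q q' : Fin k → ℕ} (hξ : ξ = ξ') (hp : p = p')
    (hq : q = q') {h : Λ.d ξ = p + q} {h' : Λ.d ξ' = p' + q'} :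
    fac Λ ξ p q h = fac Λ ξ' p' q' h' := by
  subst hξ; subst hp; subst hq; rfl

lemma eq_vert_of_d_zero {ξ : E} (h : Λ.d ξ = 0) : ξ = Λ.vert (Λ.r ξ) := by
  have h0 : Λ.d ξ = 0 + 0 := by rw [h, add_zero]
  have e1 : fac Λ ξ 0 0 h0 = (Λ.vert (Λ.r ξ), ξ) :=
    fac_eq Λ h0 (by rw [Λ.s_vert]) (Λ.d_vert _) h (Λ.vert_comp ξ)
  have e2 : fac Λ ξ 0 0 h0 = (ξ, Λ.vert (Λ.s ξ)) :=
    fac_eq Λ h0 (by rw [Λ.r_vert]) h (Λ.d_vert _) (Λ.comp_vert ξ)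
  exact (congrArg Prod.fst (e1.symm.trans e2)).symm

lemma d_split {ξ : E} {n : Fin k → ℕ} (h : n ≤ Λ.d ξ) :
    Λ.d ξ = n + (Λ.d ξ - n) := by
  funext i; simp only [Pi.add_apply, Pi.sub_apply]; have := appLe h i; omega

/-! ### Initial segments -/

/-- The initial segment `ξ(0,n)` of a path. -/
noncomputable def fst0 (ξ : E) (n : Fin k → ℕ) (h : n ≤ Λ.d ξ) : E :=
  (fac Λ ξ n (Λ.d ξ - n) (d_split Λ h)).1

/-- The final segment `ξ(n, d ξ)` of a path. -/
noncomputable def snd0 (ξ : E) (n : Fin k → ℕ) (h : n ≤ Λ.d ξ) : E :=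
  (fac Λ ξ n (Λ.d ξ - n) (d_split Λ h)).2

lemma fst0_d (ξ : E) (n : Fin k → ℕ) (h : n ≤ Λ.d ξ) :
    Λ.d (fst0 Λ ξ n h) = n :=
  (fac_spec Λ ξ n (Λ.d ξ - n) (d_split Λ h)).2.1

lemma snd0_d (ξ : E) (n : Fin k → ℕ) (h : n ≤ Λ.d ξ) :
    Λ.d (snd0 Λ ξ n h) = Λ.d ξ - n :=
  (fac_spec Λ ξ n (Λ.d ξ - n) (d_split Λ h)).2.2.1

lemma fst0_src (ξ : E) (n : Fin k → ℕ) (h : n ≤ Λ.d ξ) :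
    Λ.s (fst0 Λ ξ n h) = Λ.r (snd0 Λ ξ n h) :=
  (fac_spec Λ ξ n (Λ.d ξ - n) (d_split Λ h)).1

lemma fst0_comp_snd0 (ξ : E) (n : Fin k → ℕ) (h : n ≤ Λ.d ξ) :
    Λ.comp (fst0 Λ ξ n h) (snd0 Λ ξ n h) = ξ :=
  (fac_spec Λ ξ n (Λ.d ξ - n) (d_split Λ h)).2.2.2

lemma fst0_r (ξ : E) (n : Fin k → ℕ) (h : n ≤ Λ.d ξ) :
    Λ.r (fst0 Λ ξ n h) = Λ.r ξ := by
  conv_rhs => rw [← fst0_comp_snd0 Λ ξ n h]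
  rw [Λ.r_comp _ _ (fst0_src Λ ξ n h)]

lemma snd0_s (ξ : E) (n : Fin k → ℕ) (h : n ≤ Λ.d ξ) :
    Λ.s (snd0 Λ ξ n h) = Λ.s ξ := by
  conv_rhs => rw [← fst0_comp_snd0 Λ ξ n h]
  rw [Λ.s_comp _ _ (fst0_src Λ ξ n h)]

lemma fst0_congr {ξ ξ' : E} {n n' : Fin k → ℕ} (hξ : ξ = ξ') (hn : n = n')
    {h : n ≤ Λ.d ξ} {h' : n' ≤ Λ.d ξ'} : fst0 Λ ξ n h = fst0 Λ ξ' n' h' := by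
  subst hξ; subst hn; rfl

lemma fst0_comp {ξ ζ : E} (hs : Λ.s ξ = Λ.r ζ) {n : Fin k → ℕ}
    (h : n ≤ Λ.d ξ) (h' : n ≤ Λ.d (Λ.comp ξ ζ)) :
    fst0 Λ (Λ.comp ξ ζ) n h' = fst0 Λ ξ n h := by
  have hsB : Λ.s (snd0 Λ ξ n h) = Λ.r ζ := by rw [snd0_s]; exact hs
  have key : fac Λ (Λ.comp ξ ζ) n (Λ.d (Λ.comp ξ ζ) - n) (d_split Λ h') =
      (fst0 Λ ξ n h, Λ.comp (snd0 Λ ξ n h) ζ) := by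
    refine fac_eq Λ _ ?_ (fst0_d Λ ξ n h) ?_ ?_
    · rw [Λ.r_comp _ _ hsB]; exact fst0_src Λ ξ n h
    · rw [Λ.d_comp _ _ hsB, snd0_d, Λ.d_comp _ _ hs]
      funext i; simp only [Pi.add_apply, Pi.sub_apply]; have := appLe h i; omega
    · rw [← Λ.comp_assoc _ _ _ (fst0_src Λ ξ n h) hsB, fst0_comp_snd0]
  exact (congrArg Prod.fst key).trans rfl

lemma fst0_fst0 {ξ : E} {n p : Fin k → ℕ} (_hnp : n ≤ p) (hp : p ≤ Λ.d ξ)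
    (h1 : n ≤ Λ.d (fst0 Λ ξ p hp)) (h2 : n ≤ Λ.d ξ) :
    fst0 Λ (fst0 Λ ξ p hp) n h1 = fst0 Λ ξ n h2 := by
  refine (fst0_comp Λ (fst0_src Λ ξ p hp) h1 ?_).symm.trans
    (fst0_congr Λ (fst0_comp_snd0 Λ ξ p hp) rfl)
  rw [fst0_comp_snd0]; exact h2

lemma fst0_comp_left {μ ζ : E} (hs : Λ.s μ = Λ.r ζ)
    (h : Λ.d μ ≤ Λ.d (Λ.comp μ ζ)) : fst0 Λ (Λ.comp μ ζ) (Λ.d μ) h = μ := by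
  have key : fac Λ (Λ.comp μ ζ) (Λ.d μ) (Λ.d (Λ.comp μ ζ) - Λ.d μ) (d_split Λ h) =
      (μ, ζ) := by
    refine fac_eq Λ _ hs rfl ?_ rfl
    rw [Λ.d_comp _ _ hs]; funext i; simp only [Pi.add_apply, Pi.sub_apply]; omega
  exact (congrArg Prod.fst key).trans rfl

lemma fst0_add {μ ζ : E} (hs : Λ.s μ = Λ.r ζ) {b : Fin k → ℕ}
    (hb : b ≤ Λ.d ζ) (h' : Λ.d μ + b ≤ Λ.d (Λ.comp μ ζ)) :
    fst0 Λ (Λ.comp μ ζ) (Λ.d μ + b) h' = Λ.comp μ (fst0 Λ ζ b hb) := by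
  have hsB : Λ.s μ = Λ.r (fst0 Λ ζ b hb) := by rw [fst0_r]; exact hs
  have key : fac Λ (Λ.comp μ ζ) (Λ.d μ + b)
      (Λ.d (Λ.comp μ ζ) - (Λ.d μ + b)) (d_split Λ h') =
      (Λ.comp μ (fst0 Λ ζ b hb), snd0 Λ ζ b hb) := by
    refine fac_eq Λ _ ?_ ?_ ?_ ?_
    · rw [Λ.s_comp _ _ hsB]; exact fst0_src Λ ζ b hb
    · rw [Λ.d_comp _ _ hsB, fst0_d]
    · rw [snd0_d, Λ.d_comp _ _ hs]
      funext i; simp only [Pi.add_apply, Pi.sub_apply]; have := appLe hb i; omega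
    · rw [Λ.comp_assoc _ _ _ hsB (fst0_src Λ ζ b hb), fst0_comp_snd0]
  exact (congrArg Prod.fst key).trans rfl

/-! ### Cuts -/

lemma tsub_split {m n : Fin k → ℕ} (h : m ≤ n) : n = m + (n - m) := by
  funext i; simp only [Pi.add_apply, Pi.sub_apply]; have := appLe h i; omega

/-- The segment `ξ(m,n)` of a path. -/
noncomputable def cut (ξ : E) (m n : Fin k → ℕ) (h₁ : m ≤ n) (h₂ : n ≤ Λ.d ξ) : E :=
  (fac Λ (fst0 Λ ξ n h₂) m (n - m) ((fst0_d Λ ξ n h₂).trans (tsub_split h₁))).2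

lemma cut_congr {ξ ξ' : E} {m n m' n' : Fin k → ℕ} (hξ : ξ = ξ') (hm : m = m')
    (hn : n = n') {h₁ : m ≤ n} {h₂ : n ≤ Λ.d ξ} {h₁' : m' ≤ n'} {h₂' : n' ≤ Λ.d ξ'} :
    cut Λ ξ m n h₁ h₂ = cut Λ ξ' m' n' h₁' h₂' := by
  subst hξ; subst hm; subst hn; rfl

lemma cut_d (ξ : E) (m n : Fin k → ℕ) (h₁ : m ≤ n) (h₂ : n ≤ Λ.d ξ) :
    Λ.d (cut Λ ξ m n h₁ h₂) = n - m :=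
  (fac_spec Λ (fst0 Λ ξ n h₂) m (n - m) _).2.2.1

lemma cut_zero_left (ξ : E) (n : Fin k → ℕ) (h₁ : 0 ≤ n) (h₂ : n ≤ Λ.d ξ) :
    cut Λ ξ 0 n h₁ h₂ = fst0 Λ ξ n h₂ := by
  have key : fac Λ (fst0 Λ ξ n h₂) 0 (n - 0)
      ((fst0_d Λ ξ n h₂).trans (tsub_split h₁)) =
      (Λ.vert (Λ.r (fst0 Λ ξ n h₂)), fst0 Λ ξ n h₂) := by
    refine fac_eq Λ _ (by rw [Λ.s_vert]) (Λ.d_vert _) ?_ (Λ.vert_comp _)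
    rw [fst0_d]; funext i; simp only [Pi.sub_apply, Pi.zero_apply]; omega
  exact (congrArg Prod.snd key).trans rfl

lemma cut_lift {ξ : E} {m n p : Fin k → ℕ} (h₁ : m ≤ n) (hnp : n ≤ p)
    (hp : p ≤ Λ.d ξ) (h₂ : n ≤ Λ.d ξ) (h₂' : n ≤ Λ.d (fst0 Λ ξ p hp)) :
    cut Λ ξ m n h₁ h₂ = cut Λ (fst0 Λ ξ p hp) m n h₁ h₂' :=
  congrArg Prod.snd (fac_congr Λ (fst0_fst0 Λ hnp hp h₂' h₂).symm rfl rfl)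

lemma cut_eq_of_comp {ξ ζ : E} {m n : Fin k → ℕ} (hs : Λ.s ξ = Λ.r ζ)
    (h₁ : m ≤ n) (h₂ : n ≤ Λ.d ξ) (h₂' : n ≤ Λ.d (Λ.comp ξ ζ)) :
    cut Λ (Λ.comp ξ ζ) m n h₁ h₂' = cut Λ ξ m n h₁ h₂ :=
  congrArg Prod.snd (fac_congr Λ (fst0_comp Λ hs h₂ h₂') rfl rfl)

lemma s_cut (ξ : E) (m n : Fin k → ℕ) (h₁ : m ≤ n) (h₂ : n ≤ Λ.d ξ) :
    Λ.s (cut Λ ξ m n h₁ h₂) = Λ.s (fst0 Λ ξ n h₂) := by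
  obtain ⟨c1, c2, c3, c4⟩ :=
    fac_spec Λ (fst0 Λ ξ n h₂) m (n - m) ((fst0_d Λ ξ n h₂).trans (tsub_split h₁))
  have := Λ.s_comp _ _ c1
  rw [c4] at this
  exact this.symm

lemma cut_eq_snd0 (ξ : E) (n p : Fin k → ℕ) (h₁ : n ≤ p) (h₂ : p ≤ Λ.d ξ) :
    cut Λ ξ n p h₁ h₂ =
      snd0 Λ (fst0 Λ ξ p h₂) n (by rw [fst0_d]; exact h₁) := by
  refine congrArg Prod.snd (fac_congr Λ rfl rfl ?_)
  rw [fst0_d]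

lemma r_cut (ξ : E) (n p : Fin k → ℕ) (h₁ : n ≤ p) (h₂ : p ≤ Λ.d ξ)
    (h₃ : n ≤ Λ.d ξ) : Λ.r (cut Λ ξ n p h₁ h₂) = Λ.s (fst0 Λ ξ n h₃) := by
  rw [cut_eq_snd0]
  rw [← fst0_src]
  congr 1
  exact fst0_fst0 Λ h₁ h₂ _ h₃

lemma src_cut {ξ : E} {m n p : Fin k → ℕ} (h₁ : m ≤ n) (h₂ : n ≤ p)
    (h₃ : p ≤ Λ.d ξ) (hn : n ≤ Λ.d ξ) :
    Λ.s (cut Λ ξ m n h₁ hn) = Λ.r (cut Λ ξ n p h₂ h₃) := by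
  rw [s_cut, r_cut Λ ξ n p h₂ h₃ hn]

lemma comp_cut {ξ : E} {m n p : Fin k → ℕ} (h₁ : m ≤ n) (h₂ : n ≤ p)
    (h₃ : p ≤ Λ.d ξ) (hn : n ≤ Λ.d ξ) :
    Λ.comp (cut Λ ξ m n h₁ hn) (cut Λ ξ n p h₂ h₃) =
      cut Λ ξ m p (h₁.trans h₂) h₃ := by
  set A := fst0 Λ ξ p h₃ with hA
  have hdA : Λ.d A = p := fst0_d Λ ξ p h₃
  have hnA : n ≤ Λ.d A := by rw [hdA]; exact h₂
  set B := fst0 Λ A n hnA with hB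
  have e_np : cut Λ ξ n p h₂ h₃ = snd0 Λ A n hnA := cut_eq_snd0 Λ ξ n p h₂ h₃
  have e_mn : cut Λ ξ m n h₁ hn = cut Λ A m n h₁ hnA := cut_lift Λ h₁ h₂ h₃ hn hnA
  obtain ⟨c1, c2, c3, c4⟩ :=
    fac_spec Λ B m (n - m) ((fst0_d Λ A n hnA).trans (tsub_split h₁))
  set C₁ := (fac Λ B m (n - m) ((fst0_d Λ A n hnA).trans (tsub_split h₁))).1
  set C₂ := (fac Λ B m (n - m) ((fst0_d Λ A n hnA).trans (tsub_split h₁))).2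
  have e_mn2 : cut Λ A m n h₁ hnA = C₂ := rfl
  have hsC : Λ.s C₂ = Λ.r (snd0 Λ A n hnA) := by
    have := Λ.s_comp C₁ C₂ c1
    rw [c4] at this
    rw [← this]; exact fst0_src Λ A n hnA
  have key : fac Λ A m (p - m) ((fst0_d Λ ξ p h₃).trans (tsub_split (h₁.trans h₂))) =
      (C₁, Λ.comp C₂ (snd0 Λ A n hnA)) := by
    refine fac_eq Λ _ ?_ c2 ?_ ?_
    · rw [Λ.r_comp _ _ hsC]; exact c1
    · rw [Λ.d_comp _ _ hsC, c3, snd0_d, hdA]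
      funext i; simp only [Pi.add_apply, Pi.sub_apply]
      have := appLe h₁ i; have := appLe h₂ i; omega
    · rw [← Λ.comp_assoc _ _ _ c1 hsC, c4, fst0_comp_snd0]
  have : cut Λ ξ m p (h₁.trans h₂) h₃ = Λ.comp C₂ (snd0 Λ A n hnA) :=
    congrArg Prod.snd key
  rw [this, e_np, e_mn, e_mn2]

lemma cut_comp_shift {μ ζ : E} (hs : Λ.s μ = Λ.r ζ) {a b : Fin k → ℕ}
    (hab : a ≤ b) (hb : b ≤ Λ.d ζ) (h₁ : Λ.d μ + a ≤ Λ.d μ + b)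
    (h₂ : Λ.d μ + b ≤ Λ.d (Λ.comp μ ζ)) :
    cut Λ (Λ.comp μ ζ) (Λ.d μ + a) (Λ.d μ + b) h₁ h₂ = cut Λ ζ a b hab hb := by
  set B := fst0 Λ ζ b hb with hB
  have e1 : fst0 Λ (Λ.comp μ ζ) (Λ.d μ + b) h₂ = Λ.comp μ B := fst0_add Λ hs hb h₂
  have hsB : Λ.s μ = Λ.r B := by rw [fst0_r]; exact hs
  obtain ⟨c1, c2, c3, c4⟩ :=
    fac_spec Λ B a (b - a) ((fst0_d Λ ζ b hb).trans (tsub_split hab))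
  set C₁ := (fac Λ B a (b - a) ((fst0_d Λ ζ b hb).trans (tsub_split hab))).1
  set C₂ := (fac Λ B a (b - a) ((fst0_d Λ ζ b hb).trans (tsub_split hab))).2
  have e2 : cut Λ ζ a b hab hb = C₂ := rfl
  have step1 : cut Λ (Λ.comp μ ζ) (Λ.d μ + a) (Λ.d μ + b) h₁ h₂ =
      (fac Λ (Λ.comp μ B) (Λ.d μ + a) (Λ.d μ + b - (Λ.d μ + a))
        (by rw [Λ.d_comp _ _ hsB, fst0_d]; exact tsub_split h₁)).2 :=
    congrArg Prod.snd (fac_congr Λ e1 rfl rfl)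
  have hsC : Λ.s μ = Λ.r C₁ := by
    rw [hsB, ← c4, Λ.r_comp _ _ c1]
  have key : fac Λ (Λ.comp μ B) (Λ.d μ + a) (Λ.d μ + b - (Λ.d μ + a))
      (by rw [Λ.d_comp _ _ hsB, fst0_d]; exact tsub_split h₁) =
      (Λ.comp μ C₁, C₂) := by
    refine fac_eq Λ _ ?_ ?_ ?_ ?_
    · rw [Λ.s_comp _ _ hsC]; exact c1
    · rw [Λ.d_comp _ _ hsC, c2]
    · rw [c3]; funext i; simp only [Pi.add_apply, Pi.sub_apply]
      have := appLe hab i; omega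
    · rw [Λ.comp_assoc _ _ _ hsC c1, c4]
  rw [step1, key, e2]

lemma cut_seg {x : InfPath Λ} {m n N : Fin k → ℕ} (h₁ : m ≤ n) (h₂ : n ≤ N)
    (h0 : (0 : Fin k → ℕ) ≤ N) (hd : n ≤ Λ.d (x.seg 0 N h0)) :
    cut Λ (x.seg 0 N h0) m n h₁ hd = x.seg m n h₁ := by
  have e1 : fst0 Λ (x.seg 0 N h0) n hd = x.seg 0 n zero_le := by
    have key : fac Λ (x.seg 0 N h0) n (Λ.d (x.seg 0 N h0) - n) (d_split Λ hd) =
        (x.seg 0 n zero_le, x.seg n N h₂) := by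
      refine fac_eq Λ _ (x.src 0 n N _ _) ?_ ?_ (x.comp_seg 0 n N _ _)
      · rw [x.d_seg]; funext i; simp only [Pi.sub_apply, Pi.zero_apply]; omega
      · rw [x.d_seg, x.d_seg]; funext i
        simp only [Pi.sub_apply, Pi.zero_apply]; omega
    exact (congrArg Prod.fst key).trans rfl
  have step1 : cut Λ (x.seg 0 N h0) m n h₁ hd =
      (fac Λ (x.seg 0 n zero_le) m (n - m)
        (by rw [x.d_seg]; funext i
            simp only [Pi.add_apply, Pi.sub_apply, Pi.zero_apply]
            have := appLe h₁ i; omega)).2 :=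
    congrArg Prod.snd (fac_congr Λ e1 rfl rfl)
  have key : fac Λ (x.seg 0 n zero_le) m (n - m)
      (by rw [x.d_seg]; funext i
          simp only [Pi.add_apply, Pi.sub_apply, Pi.zero_apply]
          have := appLe h₁ i; omega) =
      (x.seg 0 m zero_le, x.seg m n h₁) := by
    refine fac_eq Λ _ (x.src 0 m n _ _) ?_ (x.d_seg m n h₁) (x.comp_seg 0 m n _ _)
    rw [x.d_seg]; funext i; simp only [Pi.sub_apply, Pi.zero_apply]; omega
  rw [step1, key]

/-! ### Infinite path helpers -/

lemma path_ext {Λ : PGraphStr (Fin k → ℕ) V E} {x y : InfPath Λ}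
    (h : ∀ m n (hmn : m ≤ n), x.seg m n hmn = y.seg m n hmn) : x = y := by
  obtain ⟨xs, xd, xsr, xss, xcs⟩ := x
  obtain ⟨ys, yd, ysr, yss, ycs⟩ := y
  have : xs = ys := by
    funext m n hmn; exact h m n hmn
  subst this
  rfl

lemma seg_congr {Λ : PGraphStr (Fin k → ℕ) V E} (x : InfPath Λ)
    {m n m' n' : Fin k → ℕ} (hm : m = m') (hn : n = n') {h : m ≤ n} {h' : m' ≤ n'} :
    x.seg m n h = x.seg m' n' h' := by
  subst hm; subst hn; rfl

lemma shift_shift {Λ : PGraphStr (Fin k → ℕ) V E} (x : InfPath Λ)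
    (p r : Fin k → ℕ) : (x.shift p).shift r = x.shift (r + p) := by
  refine path_ext fun m n hmn => ?_
  show x.seg (m + r + p) (n + r + p) _ = x.seg (m + (r + p)) (n + (r + p)) _
  exact seg_congr x (add_assoc m r p) (add_assoc n r p)

lemma range_eq_r {Λ : PGraphStr (Fin k → ℕ) V E} (x : InfPath Λ)
    (n : Fin k → ℕ) (h : 0 ≤ n) : Λ.r (x.seg 0 n h) = x.range := by
  have hc := x.comp_seg 0 0 n le_rfl h
  have hsrc := x.src 0 0 n le_rfl h
  have := Λ.r_comp _ _ hsrc
  rw [hc] at this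
  exact this

lemma shift_range {Λ : PGraphStr (Fin k → ℕ) V E} (x : InfPath Λ) (p : Fin k → ℕ) :
    (x.shift p).range = Λ.r (x.seg p p le_rfl) := by
  show Λ.r (x.seg (0 + p) (0 + p) _) = _
  exact congrArg Λ.r (seg_congr x (zero_add p) (zero_add p))

/-! ### Building infinite paths -/

section Build

variable (F : ℕ → E)

lemma dF_mono (chain : ∀ i j, i ≤ j → ∃ ζ, Λ.s (F i) = Λ.r ζ ∧ Λ.comp (F i) ζ = F j)
    {i j : ℕ} (hij : i ≤ j) : Λ.d (F i) ≤ Λ.d (F j) := by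
  obtain ⟨ζ, hs, hc⟩ := chain i j hij
  rw [← hc, Λ.d_comp _ _ hs]
  exact le_self_add

lemma cut_chain (chain : ∀ i j, i ≤ j → ∃ ζ, Λ.s (F i) = Λ.r ζ ∧ Λ.comp (F i) ζ = F j)
    {i j : ℕ} (hij : i ≤ j) {m n : Fin k → ℕ} (h₁ : m ≤ n) (h₂ : n ≤ Λ.d (F i))
    (h₂' : n ≤ Λ.d (F j)) : cut Λ (F j) m n h₁ h₂' = cut Λ (F i) m n h₁ h₂ := by
  obtain ⟨ζ, hs, hc⟩ := chain i j hij
  exact (cut_congr Λ hc.symm rfl rfl).trans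
    (cut_eq_of_comp Λ hs h₁ h₂ (by rw [hc]; exact h₂'))

/-- The segments of the path to be built. -/
noncomputable def bseg (cof : ∀ n : Fin k → ℕ, ∃ j, n ≤ Λ.d (F j))
    (m n : Fin k → ℕ) (h : m ≤ n) : E :=
  cut Λ (F (cof n).choose) m n h (cof n).choose_spec

lemma bseg_cut (cof : ∀ n : Fin k → ℕ, ∃ j, n ≤ Λ.d (F j))
    (chain : ∀ i j, i ≤ j → ∃ ζ, Λ.s (F i) = Λ.r ζ ∧ Λ.comp (F i) ζ = F j)
    {m n : Fin k → ℕ} (h₁ : m ≤ n) (j : ℕ) (hj : n ≤ Λ.d (F j)) :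
    bseg Λ F cof m n h₁ = cut Λ (F j) m n h₁ hj := by
  have hJ : n ≤ Λ.d (F (max (cof n).choose j)) :=
    le_trans hj (dF_mono Λ F chain (le_max_right _ _))
  exact (cut_chain Λ F chain (le_max_left _ _) h₁ (cof n).choose_spec hJ).symm.trans
    (cut_chain Λ F chain (le_max_right _ _) h₁ hj hJ)

/-- Build an infinite path out of a coherent cofinal family of finite paths. -/
noncomputable def buildPath (cof : ∀ n : Fin k → ℕ, ∃ j, n ≤ Λ.d (F j))
    (chain : ∀ i j, i ≤ j → ∃ ζ, Λ.s (F i) = Λ.r ζ ∧ Λ.comp (F i) ζ = F j) :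
    InfPath Λ where
  seg := bseg Λ F cof
  d_seg m n h := cut_d Λ _ m n h _
  src m n p h₁ h₂ := by
    have hdn : n ≤ Λ.d (F (max (cof n).choose (cof p).choose)) :=
      le_trans (cof n).choose_spec (dF_mono Λ F chain (le_max_left _ _))
    have hdp : p ≤ Λ.d (F (max (cof n).choose (cof p).choose)) :=
      le_trans (cof p).choose_spec (dF_mono Λ F chain (le_max_right _ _))
    rw [bseg_cut Λ F cof chain h₁ _ hdn, bseg_cut Λ F cof chain h₂ _ hdp]
    exact src_cut Λ h₁ h₂ hdp hdn
  seg_self m := eq_vert_of_d_zero Λ (by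
    have : Λ.d (bseg Λ F cof m m le_rfl) = m - m := cut_d Λ _ m m le_rfl _
    rw [this]; funext i; simp only [Pi.sub_apply, Pi.zero_apply]; omega)
  comp_seg m n p h₁ h₂ := by
    have hdn : n ≤ Λ.d (F (max (cof n).choose (cof p).choose)) :=
      le_trans (cof n).choose_spec (dF_mono Λ F chain (le_max_left _ _))
    have hdp : p ≤ Λ.d (F (max (cof n).choose (cof p).choose)) :=
      le_trans (cof p).choose_spec (dF_mono Λ F chain (le_max_right _ _))
    rw [bseg_cut Λ F cof chain h₁ _ hdn, bseg_cut Λ F cof chain h₂ _ hdp,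
      bseg_cut Λ F cof chain (h₁.trans h₂) _ hdp]
    exact comp_cut Λ h₁ h₂ hdp hdn

lemma buildPath_seg (cof : ∀ n : Fin k → ℕ, ∃ j, n ≤ Λ.d (F j))
    (chain : ∀ i j, i ≤ j → ∃ ζ, Λ.s (F i) = Λ.r ζ ∧ Λ.comp (F i) ζ = F j)
    {m n : Fin k → ℕ} (h₁ : m ≤ n) (j : ℕ) (hj : n ≤ Λ.d (F j)) :
    (buildPath Λ F cof chain).seg m n h₁ = cut Λ (F j) m n h₁ hj :=
  bseg_cut Λ F cof chain h₁ j hj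

lemma buildPath_range (cof : ∀ n : Fin k → ℕ, ∃ j, n ≤ Λ.d (F j))
    (chain : ∀ i j, i ≤ j → ∃ ζ, Λ.s (F i) = Λ.r ζ ∧ Λ.comp (F i) ζ = F j) :
    (buildPath Λ F cof chain).range = Λ.r (F 0) := by
  show Λ.r ((buildPath Λ F cof chain).seg 0 0 le_rfl) = _
  rw [buildPath_seg Λ F cof chain le_rfl 0 zero_le, cut_zero_left, fst0_r]

end Build

lemma chain_of_succ (F : ℕ → E)
    (h : ∀ j, ∃ ζ, Λ.s (F j) = Λ.r ζ ∧ Λ.comp (F j) ζ = F (j + 1)) :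
    ∀ i j, i ≤ j → ∃ ζ, Λ.s (F i) = Λ.r ζ ∧ Λ.comp (F i) ζ = F j := by
  intro i j hij
  induction j, hij using Nat.le_induction with
  | base => exact ⟨Λ.vert (Λ.s (F i)), (Λ.r_vert _).symm, Λ.comp_vert _⟩
  | succ j hij ih =>
    obtain ⟨ζ, h1, h2⟩ := ih
    obtain ⟨ζ', h1', h2'⟩ := h j
    have hzz : Λ.s ζ = Λ.r ζ' := by
      have := Λ.s_comp _ _ h1
      rw [h2] at this
      exact this.symm.trans h1'
    refine ⟨Λ.comp ζ ζ', ?_, ?_⟩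
    · rw [Λ.r_comp _ _ hzz]; exact h1
    · rw [← Λ.comp_assoc _ _ _ h1 hzz, h2, h2']
/-! ### Extension of infinite paths -/

lemma pile {m n : Fin k → ℕ} (h : ∀ i, m i ≤ n i) : m ≤ n := h

theorem extends_exists (μ : E) (x : InfPath Λ) (hx : x.range = Λ.s μ) :
    ∃ y : InfPath Λ, Extends Λ y μ x := by
  set F : ℕ → E := fun j => Λ.comp μ (x.seg 0 (fun _ => j) zero_le) with hF
  have hsμ : ∀ j : ℕ, Λ.s μ = Λ.r (x.seg 0 (fun _ => j) zero_le) := fun j => by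
    rw [range_eq_r x _ zero_le]; exact hx.symm
  have hFd : ∀ (j : ℕ) (i : Fin k), Λ.d (F j) i = Λ.d μ i + j := by
    intro j i
    have : Λ.d (F j) = Λ.d μ + Λ.d (x.seg 0 (fun _ => j) zero_le) :=
      Λ.d_comp _ _ (hsμ j)
    rw [this, x.d_seg]
    simp only [Pi.add_apply, Pi.sub_apply, Pi.zero_apply]
    omega
  have cof : ∀ n : Fin k → ℕ, ∃ j, n ≤ Λ.d (F j) := by
    intro n
    refine ⟨Finset.univ.sup n, pile fun i => ?_⟩
    have h1 : n i ≤ Finset.univ.sup n := Finset.le_sup (Finset.mem_univ i)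
    have h2 := hFd (Finset.univ.sup n) i
    omega
  have chain : ∀ i j, i ≤ j → ∃ ζ, Λ.s (F i) = Λ.r ζ ∧ Λ.comp (F i) ζ = F j := by
    intro a b hab
    have hle : (fun _ => a : Fin k → ℕ) ≤ fun _ => b := fun _ => hab
    refine ⟨x.seg (fun _ => a) (fun _ => b) hle, ?_, ?_⟩
    · have := Λ.s_comp μ _ (hsμ a)
      rw [this]
      exact x.src 0 _ _ zero_le hle
    · show Λ.comp (Λ.comp μ _) _ = _
      rw [Λ.comp_assoc _ _ _ (hsμ a) (x.src 0 _ _ zero_le hle),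
        x.comp_seg 0 _ _ zero_le hle]
  refine ⟨buildPath Λ F cof chain, ?_, ?_⟩
  · have hd0 : Λ.d μ ≤ Λ.d (F 0) := pile fun i => by
      have h2 : Λ.d (F 0) i = Λ.d μ i + 0 := hFd 0 i
      omega
    rw [buildPath_seg Λ F cof chain zero_le 0 hd0, cut_zero_left]
    exact fst0_comp_left Λ (hsμ 0) hd0
  · refine path_ext fun m n hmn => ?_
    show (buildPath Λ F cof chain).seg (m + Λ.d μ) (n + Λ.d μ)
      (add_le_add hmn (le_refl (Λ.d μ))) = x.seg m n hmn
    set j := (cof (n + Λ.d μ)).choose with hj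
    have hjs : n + Λ.d μ ≤ Λ.d (F j) := (cof (n + Λ.d μ)).choose_spec
    have hnd : n ≤ Λ.d (x.seg 0 (fun _ => j) zero_le) := by
      rw [x.d_seg]
      intro i
      have := appLe hjs i
      have := hFd j i
      simp only [Pi.add_apply, Pi.sub_apply, Pi.zero_apply] at *
      omega
    have hnj : n ≤ (fun _ => j : Fin k → ℕ) := pile fun i => by
      show n i ≤ j
      have h2 : Λ.d (F j) i = Λ.d μ i + j := hFd j i
      have h3 : (n + Λ.d μ) i ≤ Λ.d (F j) i := appLe hjs i
      simp only [Pi.add_apply] at h3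
      omega
    rw [buildPath_seg Λ F cof chain (add_le_add hmn (le_refl (Λ.d μ))) j hjs]
    have e1 : cut Λ (F j) (m + Λ.d μ) (n + Λ.d μ) (add_le_add hmn (le_refl (Λ.d μ))) hjs =
        cut Λ (F j) (Λ.d μ + m) (Λ.d μ + n) (add_le_add (le_refl (Λ.d μ)) hmn)
          (by rw [add_comm]; exact hjs) :=
      cut_congr Λ rfl (add_comm m (Λ.d μ)) (add_comm n (Λ.d μ))
    rw [e1]
    have e2 : cut Λ (F j) (Λ.d μ + m) (Λ.d μ + n) (add_le_add (le_refl (Λ.d μ)) hmn)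
        (by rw [add_comm]; exact hjs) =
        cut Λ (x.seg 0 (fun _ => j) zero_le) m n hmn hnd :=
      cut_comp_shift Λ (hsμ j) hmn hnd _ _
    rw [e2]
    exact cut_seg Λ hmn hnj zero_le hnd

/-! ### Existence of infinite paths -/

/-- An iterated composite of chosen edges out of each vertex. -/
noncomputable def seqF (κ : V → E) (v : V) : ℕ → E
  | 0 => Λ.vert v
  | j + 1 => Λ.comp (seqF κ v j) (κ (Λ.s (seqF κ v j)))

theorem infpath_exists (hrf : RowFiniteNoSources Λ) (v : V) :
    ∃ x : InfPath Λ, x.range = v := by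
  have sel : ∀ w : V, ∃ e : E, Λ.r e = w ∧ Λ.d e = fun _ => 1 := fun w =>
    (hrf w (fun _ => 1)).2
  choose κ hκr hκd using sel
  set F : ℕ → E := seqF Λ κ v with hFdef
  have hstep : ∀ j, ∃ ζ, Λ.s (F j) = Λ.r ζ ∧ Λ.comp (F j) ζ = F (j + 1) := by
    intro j
    exact ⟨κ (Λ.s (F j)), (hκr _).symm, rfl⟩
  have chain := chain_of_succ Λ F hstep
  have hFd : ∀ j : ℕ, Λ.d (F j) = fun _ => j := by
    intro j
    induction j with
    | zero => rw [show F 0 = Λ.vert v from rfl, Λ.d_vert]; rfl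
    | succ j ih =>
      have : F (j + 1) = Λ.comp (F j) (κ (Λ.s (F j))) := rfl
      rw [this, Λ.d_comp _ _ (hκr _).symm, ih, hκd]
      funext i; simp only [Pi.add_apply]
  have cof : ∀ n : Fin k → ℕ, ∃ j, n ≤ Λ.d (F j) := by
    intro n
    refine ⟨Finset.univ.sup n, pile fun i => ?_⟩
    rw [hFd]
    exact Finset.le_sup (Finset.mem_univ i)
  refine ⟨buildPath Λ F cof chain, ?_⟩
  rw [buildPath_range Λ F cof chain]
  exact Λ.r_vert v

/-! ### Properties of the relations `Σ_v` -/

lemma sigmaV_shift {v : V} {a b : Fin k → ℕ} (h : (a, b) ∈ SigmaV Λ v)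
    {x : InfPath Λ} (hx : x.range = v) : x.shift a = x.shift b := h x hx

lemma sigmaV_descend (e : E) {a b : Fin k → ℕ}
    (h : (a, b) ∈ SigmaV Λ (Λ.r e)) : (a, b) ∈ SigmaV Λ (Λ.s e) := by
  intro x hx
  obtain ⟨y, hy1, hy2⟩ := extends_exists Λ e x hx
  have hyr : y.range = Λ.r e :=
    ((range_eq_r y (Λ.d e) zero_le).symm).trans (congrArg Λ.r hy1)
  have hy := h y hyr
  calc x.shift a = (y.shift (Λ.d e)).shift a := by rw [hy2]
    _ = y.shift (a + Λ.d e) := shift_shift y (Λ.d e) a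
    _ = (y.shift a).shift (Λ.d e) := by
        rw [shift_shift y a (Λ.d e), add_comm (Λ.d e) a]
    _ = (y.shift b).shift (Λ.d e) := by rw [hy]
    _ = y.shift (b + Λ.d e) := by rw [shift_shift y b (Λ.d e), add_comm (Λ.d e) b]
    _ = (y.shift (Λ.d e)).shift b := (shift_shift y (Λ.d e) b).symm
    _ = x.shift b := by rw [hy2]

end PGAux

/-- If `Λ` is a row-finite `k`-graph with no sources such that `Λ⁰` is a maximal tail,
then `(Σ_Λ - Σ_Λ) ∩ (ℕ^k × ℕ^k) = Σ_Λ`, differences being taken in `ℤ^k × ℤ^k`. -/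
theorem stmt12 (k : ℕ) (V E : Type) [Countable E] (Λ : PGraphStr (Fin k → ℕ) V E)
    (hrf : RowFiniteNoSources Λ) (hmt : IsMaximalTail Λ Set.univ)
    (p q : Fin k → ℕ) :
    (p, q) ∈ SigmaL Λ ↔
      ∃ a₁ a₂ b₁ b₂ : Fin k → ℕ, (a₁, a₂) ∈ SigmaL Λ ∧ (b₁, b₂) ∈ SigmaL Λ ∧
        (fun i => (p i : ℤ)) = (fun i => (a₁ i : ℤ) - (b₁ i : ℤ)) ∧
        (fun i => (q i : ℤ)) = (fun i => (a₂ i : ℤ) - (b₂ i : ℤ)) := by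
  constructor
  · intro hpq
    obtain ⟨v, -⟩ := hmt.1
    have h00 : ((0 : Fin k → ℕ), (0 : Fin k → ℕ)) ∈ SigmaL Λ :=
      Set.mem_iUnion.mpr ⟨v, fun x _ => rfl⟩
    exact ⟨p, q, 0, 0, hpq, h00,
      by funext i; simp, by funext i; simp⟩
  · rintro ⟨a₁, a₂, b₁, b₂, ha, hb, hp, hq⟩
    obtain ⟨va, hva⟩ := Set.mem_iUnion.mp ha
    obtain ⟨vb, hvb⟩ := Set.mem_iUnion.mp hb
    have ha1 : a₁ = p + b₁ := by
      funext i
      have h1 := congrFun hp i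
      simp only [Pi.add_apply] at *
      omega
    have ha2 : a₂ = q + b₂ := by
      funext i
      have h1 := congrFun hq i
      simp only [Pi.add_apply] at *
      omega
    obtain ⟨u, -, ⟨e, he1, he2⟩, ⟨f, hf1, hf2⟩⟩ :=
      hmt.2.1 va (Set.mem_univ va) vb (Set.mem_univ vb)
    have hau : (a₁, a₂) ∈ SigmaV Λ u := by
      rw [← he2]
      exact PGAux.sigmaV_descend Λ e (by rw [he1]; exact hva)
    have hbu : (b₁, b₂) ∈ SigmaV Λ u := by
      rw [← hf2]
      exact PGAux.sigmaV_descend Λ f (by rw [hf1]; exact hvb)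
    have hstep : ∀ x : InfPath Λ, x.range = u →
        x.shift (p + b₂) = x.shift (q + b₂) := by
      intro x hx
      have e1 : x.shift b₁ = x.shift b₂ := hbu x hx
      have e2 : x.shift a₁ = x.shift a₂ := hau x hx
      calc x.shift (p + b₂) = (x.shift b₂).shift p := (PGAux.shift_shift x b₂ p).symm
        _ = (x.shift b₁).shift p := by rw [e1]
        _ = x.shift (p + b₁) := PGAux.shift_shift x b₁ p
        _ = x.shift a₁ := by rw [ha1]
        _ = x.shift a₂ := e2
        _ = x.shift (q + b₂) := by rw [ha2]
    obtain ⟨x₀, hx₀⟩ := PGAux.infpath_exists Λ hrf u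
    set μ := x₀.seg 0 b₂ zero_le with hμ
    have hdμ : Λ.d μ = b₂ := by
      rw [hμ, x₀.d_seg]
      funext i; simp only [Pi.sub_apply, Pi.zero_apply]; omega
    refine Set.mem_iUnion.mpr ⟨Λ.r (x₀.seg b₂ b₂ le_rfl), ?_⟩
    intro y hy
    have hsy : y.range = Λ.s μ := by
      rw [hy, hμ, x₀.src 0 b₂ b₂ zero_le le_rfl]
    obtain ⟨z, hz1, hz2⟩ := PGAux.extends_exists Λ μ y hsy
    have hzr : z.range = u := by
      rw [← PGAux.range_eq_r z (Λ.d μ) zero_le, hz1, hμ,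
        PGAux.range_eq_r x₀ b₂ zero_le, hx₀]
    have h5 := hstep z hzr
    calc y.shift p = (z.shift (Λ.d μ)).shift p := by rw [hz2]
      _ = z.shift (p + Λ.d μ) := PGAux.shift_shift z (Λ.d μ) p
      _ = z.shift (p + b₂) := by rw [hdμ]
      _ = z.shift (q + b₂) := h5
      _ = z.shift (q + Λ.d μ) := by rw [hdμ]
      _ = (z.shift (Λ.d μ)).shift q := (PGAux.shift_shift z (Λ.d μ) q).symm
      _ = y.shift q := by rw [hz2]
end
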